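/- arXiv:1903.09057 — 5 statements merged into one kernel-verified Lean document; each statement's English description precedes it below -/
import Mathlib

section
/- Let r ≥ 3 and n ≥ r, and let H be an r-uniform hypergraph on n vertices. If the minimum vertex degree satisfies δ₁(H) > C(⌈n/2⌉ − 1, r−1), then H contains a weak Hamilton cycle, i.e. an alternating sequence (v₁, e₁, v₂, …, vₙ, eₙ) of distinct vertices v₁,…,vₙ and (not necessarily distinct) hyperedges e₁,…,eₙ such that {v₁,vₙ} ⊆ eₙ and {vᵢ, vᵢ₊₁} ⊆ eᵢ for every i ∈ [n−1]. -/
/-!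
Call two vertices adjacent when some hyperedge contains both (the 2-section of `H`). A vertex with
`d` neighbours lies in at most `C(d, r - 1)` hyperedges, so the degree condition forces `2d ≥ n`,
and Dirac's theorem gives a Hamilton cycle of the 2-section; choosing a hyperedge through each of
its edges gives the weak Hamilton cycle.

For Dirac's theorem take a cyclic arrangement `v 0, …, v m` of the vertices with the most adjacent
consecutive pairs. If `v m` and `v 0` were not adjacent, the degree condition and pigeonhole would
give `j < m` with `v m ~ v j` and `v 0 ~ v (j + 1)`, and reversing the block `v 0, …, v j` would
create an additional adjacent pair.
-/

/-- A weak Hamilton cycle in an `r`-uniform hypergraph on vertex set `Fin n`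
with edge set `E`: a cyclic alternating sequence of `n` distinct vertices and
`n` (not necessarily distinct) hyperedges, with each consecutive pair of
vertices (cyclically) contained in the corresponding hyperedge. -/
def IsWeakHamCycle (n : ℕ) [NeZero n] (E : Finset (Finset (Fin n)))
    (v : Fin n → Fin n) (e : Fin n → Finset (Fin n)) : Prop :=
  Function.Bijective v ∧ (∀ i, e i ∈ E) ∧ ∀ i : Fin n, v i ∈ e i ∧ v (i + 1) ∈ e i

open Finset

section ReflectPrefix

variable {n : ℕ} {j : Fin (n + 1)} {k : Fin n}

def reflectPrefix (j : Fin (n + 1)) (k : Fin n) : Fin n :=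
  if h : (k : ℕ) < j then ⟨j - 1 - k, by omega⟩ else k

lemma val_reflectPrefix_of_lt (h : (k : ℕ) < j) :
    (reflectPrefix j k : ℕ) = j - 1 - k := by
  simp [reflectPrefix, h]

lemma reflectPrefix_of_le (h : (j : ℕ) ≤ k) :
    reflectPrefix j k = k :=
  dif_neg (by omega)

lemma reflectPrefix_involutive (j : Fin (n + 1)) : Function.Involutive (reflectPrefix j) := by
  intro k
  by_cases h : (k : ℕ) < j
  · have h' : (reflectPrefix j k : ℕ) < j := by rw [val_reflectPrefix_of_lt h]; omega
    ext
    rw [val_reflectPrefix_of_lt h', val_reflectPrefix_of_lt h]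
    omega
  · have hk : reflectPrefix j k = k := reflectPrefix_of_le (by omega)
    rw [hk, hk]

end ReflectPrefix

section Arrangement

variable {V : Type*} (G : SimpleGraph V) [DecidableRel G.Adj] {m : ℕ}

def adjPositions (v : Fin (m + 1) → V) : Finset (Fin (m + 1)) :=
  {i | G.Adj (v i) (v (i + 1))}

lemma card_adjPositions_comp_addRight (v : Fin (m + 1) → V) (c : Fin (m + 1)) :
    #(adjPositions G (v ∘ (· + c))) = #(adjPositions G v) :=
  card_equiv (Equiv.addRight c) fun i => by simp [adjPositions, add_right_comm]

lemma mem_adjPositions_comp_reflectPrefix (v : Fin (m + 1) → V) {j : Fin (m + 1)}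
    (hj : j ≠ Fin.last m) (hj₀ : G.Adj (v 0) (v (j + 1))) {i : Fin (m + 1)}
    (hi : i ∈ adjPositions G v) (hi_last : i ≠ Fin.last m) :
    reflectPrefix j.castSucc i ∈ adjPositions G (v ∘ reflectPrefix j.succ) := by
  rw [adjPositions, mem_filter] at hi ⊢
  have hi1 : ((i + 1 : Fin (m + 1)) : ℕ) = i + 1 :=
    Fin.val_add_one_of_lt (Fin.lt_last_iff_ne_last.mpr hi_last)
  have hj1 : ((j + 1 : Fin (m + 1)) : ℕ) = j + 1 :=
    Fin.val_add_one_of_lt (Fin.lt_last_iff_ne_last.mpr hj)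
  rcases lt_trichotomy i j with hij | rfl | hji
  · set p := reflectPrefix j.castSucc i
    have hp : (p : ℕ) = j - 1 - i := val_reflectPrefix_of_lt hij
    have hp1 : ((p + 1 : Fin (m + 1)) : ℕ) = j - i := by
      rw [Fin.val_add_one_of_lt (Fin.lt_last_iff_ne_last.mpr fun h => by
        rw [h, Fin.val_last] at hp; omega), hp]
      omega
    have hwp : reflectPrefix j.succ p = i + 1 := by
      ext; rw [val_reflectPrefix_of_lt (by simp; omega), hi1]; simp; omega
    have hwp1 : reflectPrefix j.succ (p + 1) = i := by
      ext; rw [val_reflectPrefix_of_lt (by simp; omega), hp1]; simp; omega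
    simpa [hwp, hwp1] using hi.2.symm
  · have hψ : reflectPrefix i.castSucc i = i := reflectPrefix_of_le (by simp)
    have hφ : reflectPrefix i.succ i = 0 := by ext; rw [val_reflectPrefix_of_lt (by simp)]; simp
    have hφ1 : reflectPrefix i.succ (i + 1) = i + 1 := reflectPrefix_of_le (by simp [hj1])
    simpa [hψ, hφ, hφ1] using hj₀
  · have hψ : reflectPrefix j.castSucc i = i := reflectPrefix_of_le (by simp; omega)
    have hφ : reflectPrefix j.succ i = i := reflectPrefix_of_le (by simp; omega)
    have hφ1 : reflectPrefix j.succ (i + 1) = i + 1 := reflectPrefix_of_le (by simp [hi1]; omega)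
    simpa [hψ, hφ, hφ1] using hi.2

theorem card_adjPositions_lt_comp_reflectPrefix (v : Fin (m + 1) → V) {j : Fin (m + 1)}
    (hj : j ≠ Fin.last m) (hbad : ¬G.Adj (v (Fin.last m)) (v 0))
    (hj_last : G.Adj (v (Fin.last m)) (v j)) (hj₀ : G.Adj (v 0) (v (j + 1))) :
    #(adjPositions G v) < #(adjPositions G (v ∘ reflectPrefix j.succ)) := by
  -- the consecutive pair of `v` at position `i` sits at position `ψ i` after the reversal
  set ψ := reflectPrefix (n := m + 1) j.castSucc
  have hψ_inj : Function.Injective ψ := (reflectPrefix_involutive _).injective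
  have hlast_notMem : Fin.last m ∉ adjPositions G v := by simpa [adjPositions] using hbad
  have hsub : (adjPositions G v).image ψ ⊆ adjPositions G (v ∘ reflectPrefix j.succ) := by
    intro p hp
    obtain ⟨i, hi, rfl⟩ := mem_image.mp hp
    exact mem_adjPositions_comp_reflectPrefix G v hj hj₀ hi (ne_of_mem_of_not_mem hi hlast_notMem)
  have hlast_mem : Fin.last m ∈ adjPositions G (v ∘ reflectPrefix j.succ) := by
    have hφ_last : reflectPrefix j.succ (Fin.last m) = Fin.last m :=
      reflectPrefix_of_le (by simpa using Fin.val_lt_last hj)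
    have hφ₀ : reflectPrefix j.succ 0 = j := by ext; rw [val_reflectPrefix_of_lt (by simp)]; simp
    simpa [adjPositions, hφ_last, hφ₀] using hj_last
  have hlast_notMem_image : Fin.last m ∉ (adjPositions G v).image ψ := by
    have hψ_last : ψ (Fin.last m) = Fin.last m :=
      reflectPrefix_of_le (by simpa using (Fin.val_lt_last hj).le)
    rwa [← hψ_last, hψ_inj.mem_finset_image]
  calc #(adjPositions G v) = #((adjPositions G v).image ψ) :=
        (card_image_of_injective _ hψ_inj).symm
    _ < #(adjPositions G (v ∘ reflectPrefix j.succ)) :=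
      card_lt_card ((ssubset_iff_of_subset hsub).mpr ⟨_, hlast_mem, hlast_notMem_image⟩)

variable [Fintype V]

lemma exists_adj_last_and_zero_adj_add_one (v : Fin (m + 1) ≃ V)
    (hdeg : ∀ x, m + 1 ≤ 2 * G.degree x) :
    ∃ j ≠ Fin.last m, G.Adj (v (Fin.last m)) (v j) ∧ G.Adj (v 0) (v (j + 1)) := by
  set S : Finset (Fin (m + 1)) := {j | G.Adj (v (Fin.last m)) (v j)}
  set T : Finset (Fin (m + 1)) := {j | G.Adj (v 0) (v (j + 1))}
  have hS : #S = G.degree (v (Fin.last m)) := by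
    rw [← G.card_neighborFinset_eq_degree]
    exact card_equiv v fun j => by simp [S]
  have hT : #T = G.degree (v 0) := by
    rw [← G.card_neighborFinset_eq_degree]
    exact card_equiv ((Equiv.addRight 1).trans v) fun j => by simp [T]
  have hS_sub : S ⊆ univ.erase (Fin.last m) := by
    intro j hj
    simp only [S, mem_filter, mem_univ, true_and] at hj
    exact mem_erase.mpr ⟨by rintro rfl; exact hj.ne rfl, mem_univ _⟩
  have hT_sub : T ⊆ univ.erase (Fin.last m) := by
    intro j hj
    simp only [T, mem_filter, mem_univ, true_and] at hj
    refine mem_erase.mpr ⟨?_, mem_univ _⟩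
    rintro rfl
    rw [Fin.last_add_one] at hj
    exact hj.ne rfl
  have hcard : #(univ.erase (Fin.last m)) < #S + #T := by
    rw [card_erase_of_mem (mem_univ _), card_univ, Fintype.card_fin, hS, hT]
    have := hdeg (v (Fin.last m))
    have := hdeg (v 0)
    omega
  obtain ⟨j, hj⟩ := inter_nonempty_of_card_lt_card_add_card hS_sub hT_sub hcard
  simp only [S, T, mem_inter, mem_filter, mem_univ, true_and] at hj
  exact ⟨j, by rintro rfl; exact hj.1.ne rfl, hj⟩

theorem exists_equiv_forall_adj_add_one_of_le_two_mul_degree (hV : Fintype.card V = m + 1)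
    (hdeg : ∀ x, m + 1 ≤ 2 * G.degree x) :
    ∃ v : Fin (m + 1) ≃ V, ∀ i, G.Adj (v i) (v (i + 1)) := by
  have : Nonempty (Fin (m + 1) ≃ V) := ⟨(Fintype.equivFinOfCardEq hV).symm⟩
  obtain ⟨v, hmax⟩ := Finite.exists_max fun v : Fin (m + 1) ≃ V => #(adjPositions G v)
  refine ⟨v, fun i => ?_⟩
  by_contra hbad
  -- rotate the non-adjacent pair to positions `last, 0`
  set u := (Equiv.addRight (i + 1)).trans v
  have hu : ⇑u = v ∘ (· + (i + 1)) := rfl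
  have hu_bad : ¬G.Adj (u (Fin.last m)) (u 0) := by
    have h_last : Fin.last m + (i + 1) = i := by
      rw [add_comm i, ← add_assoc, Fin.last_add_one, zero_add]
    simpa [hu, h_last] using hbad
  obtain ⟨j, hj, hj_last, hj₀⟩ := exists_adj_last_and_zero_adj_add_one G u hdeg
  have hlt := card_adjPositions_lt_comp_reflectPrefix G u hj hu_bad hj_last hj₀
  rw [hu, card_adjPositions_comp_addRight] at hlt
  exact (hmax ((reflectPrefix_involutive j.succ).toPerm.trans u)).not_gt hlt

end Arrangement

section TwoSection

variable {V : Type*}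

def twoSection (E : Finset (Finset V)) : SimpleGraph V where
  Adj x y := x ≠ y ∧ ∃ s ∈ E, x ∈ s ∧ y ∈ s
  symm := ⟨fun _ _ ⟨hne, s, hs, hx, hy⟩ => ⟨hne.symm, s, hs, hy, hx⟩⟩
  loopless := ⟨fun _ h => h.1 rfl⟩

lemma twoSection_adj {E : Finset (Finset V)} {x y : V} :
    (twoSection E).Adj x y ↔ x ≠ y ∧ ∃ s ∈ E, x ∈ s ∧ y ∈ s :=
  Iff.rfl

lemma card_filter_mem_le_choose_degree [Fintype V] [DecidableEq V] {E : Finset (Finset V)}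
    [DecidableRel (twoSection E).Adj] {r : ℕ} (hE : ∀ s ∈ E, #s = r) (x : V) :
    #{s ∈ E | x ∈ s} ≤ ((twoSection E).degree x).choose (r - 1) := by
  rw [← SimpleGraph.card_neighborFinset_eq_degree, ← card_powersetCard]
  refine card_le_card_of_injOn (fun s => s.erase x) (fun s hs => ?_)
    ((erase_injOn' x).mono fun s hs => (mem_filter.mp hs).2)
  obtain ⟨hsE, hxs⟩ := mem_filter.mp hs
  rw [mem_coe, mem_powersetCard, card_erase_of_mem hxs, hE s hsE]
  refine ⟨fun y hy => ?_, rfl⟩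
  obtain ⟨hyx, hys⟩ := mem_erase.mp hy
  exact (SimpleGraph.mem_neighborFinset _ _ _).mpr ⟨Ne.symm hyx, s, hsE, hxs, hys⟩

end TwoSection

theorem stmt0_general (r n : ℕ) [NeZero n]
    (E : Finset (Finset (Fin n))) (hE : ∀ s ∈ E, s.card = r)
    (hdeg : ∀ x : Fin n,
      (((n + 1) / 2 - 1).choose (r - 1)) < (E.filter (fun s => x ∈ s)).card) :
    ∃ v e, IsWeakHamCycle n E v e := by
  classical
  have hdirac : ∀ x, n ≤ 2 * (twoSection E).degree x := by
    intro x
    by_contra! hlt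
    have hchoose :=
      Nat.choose_le_choose (r - 1) (by omega : (twoSection E).degree x ≤ (n + 1) / 2 - 1)
    exact (hdeg x).not_ge ((card_filter_mem_le_choose_degree hE x).trans hchoose)
  obtain ⟨m, rfl⟩ := Nat.exists_eq_add_one_of_ne_zero (NeZero.ne n)
  obtain ⟨v, hv⟩ :=
    exists_equiv_forall_adj_add_one_of_le_two_mul_degree (twoSection E) (Fintype.card_fin _) hdirac
  choose e heE hve using fun i => (twoSection_adj.mp (hv i)).2
  exact ⟨v, e, v.bijective, heE, hve⟩

theorem stmt0 (r n : ℕ) [NeZero n] (hr : 3 ≤ r) (hn : r ≤ n)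
    (E : Finset (Finset (Fin n))) (hE : ∀ s ∈ E, s.card = r)
    (hdeg : ∀ x : Fin n,
      (((n + 1) / 2 - 1).choose (r - 1)) < (E.filter (fun s => x ∈ s)).card) :
    ∃ v e, IsWeakHamCycle n E v e :=
  stmt0_general r n E hE hdeg
end

section
/- Let r ≥ 3 and let H be an r-uniform hypergraph on n > 2r−2 vertices. If δ₁(H) ≥ C(⌈n/2⌉ − 1, r−1) + n − 1, then H contains a Hamilton Berge cycle. -/
/-!
Take a Berge path `v 0, …, v (L - 1)` of maximal length. An edge off the path at an endpoint lies
inside the path, since otherwise the path would extend. Unless one off-path edge contains both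
endpoints, it suffices to find a crossing index `i`: `v 0` shares an edge with `v (i + 1)` and
`v (L - 1)` shares a different edge with `v i`, each edge either off the path or `e i`. Then
`v 0, …, v i, v (L - 1), …, v (i + 1)` is a cycle on the vertex set of the path. If there is no
crossing, the index sets witnessing these adjacencies are disjoint, and the `r`-sets through an
endpoint are too few for the degree bound. Finally, if the cycle misses a vertex `w`, every edge at
`w` is a cycle edge or avoids the cycle, since otherwise opening the cycle at a vertex of that edge
gives a longer path. The degree bound forces `L > ⌈n/2⌉`, so `w` then lies in at most
`L + C(n - L - 1, r - 1) < C(⌈n/2⌉ - 1, r - 1) + n - 1` edges.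
-/

/-- A Hamilton Berge cycle in an `r`-uniform hypergraph on vertex set `Fin n`
with edge set `E`: a cyclic alternating sequence of `n` distinct vertices and
`n` pairwise distinct hyperedges, with each consecutive pair of vertices
(cyclically) contained in the corresponding hyperedge. -/
def IsHamBergeCycle (n : ℕ) [NeZero n] (E : Finset (Finset (Fin n)))
    (v : Fin n → Fin n) (e : Fin n → Finset (Fin n)) : Prop :=
  Function.Bijective v ∧ Function.Injective e ∧ (∀ i, e i ∈ E) ∧
    ∀ i : Fin n, v i ∈ e i ∧ v (i + 1) ∈ e i

open Finset

lemma Nat.choose_lt_choose_of_lt {a b k : ℕ} (hk : 0 < k) (hab : a < b) (hkb : k ≤ b) :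
    a.choose k < b.choose k := by
  rcases lt_or_ge a k with h | h
  · rw [choose_eq_zero_of_lt h]
    exact choose_pos hkb
  · obtain ⟨k, rfl⟩ : ∃ j, k = j + 1 := ⟨k - 1, by omega⟩
    calc a.choose (k + 1) < a.choose k + a.choose (k + 1) :=
          Nat.lt_add_of_pos_left (choose_pos (by omega))
      _ = (a + 1).choose (k + 1) := (choose_succ_succ a k).symm
      _ ≤ b.choose (k + 1) := choose_le_choose _ hab

lemma Finset.card_add_card_le_of_disjoint {α : Type*} [DecidableEq α] {s t u : Finset α}
    (h : Disjoint s t) (hs : s ⊆ u) (ht : t ⊆ u) : #s + #t ≤ #u := by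
  rw [← card_union_of_disjoint h]
  exact card_le_card (union_subset hs ht)

variable {V : Type*}

lemma card_le_choose_of_erase_subset [DecidableEq V] {r : ℕ} {x : V} {U : Finset (Finset V)}
    {N : Finset V} (hU : ∀ s ∈ U, x ∈ s ∧ #s = r) (hN : ∀ s ∈ U, s.erase x ⊆ N) :
    #U ≤ (#N).choose (r - 1) :=
  calc #U ≤ #(N.powersetCard (r - 1)) := by
        refine card_le_card_of_injOn (·.erase x) (fun s hs => ?_) (fun s hs t ht hst => ?_)
        · rw [mem_coe, mem_powersetCard, card_erase_of_mem (hU s hs).1, (hU s hs).2]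
          exact ⟨hN s hs, rfl⟩
        · rw [← insert_erase (hU s hs).1, ← insert_erase (hU t ht).1]
          exact congrArg (insert x) hst
    _ = (#N).choose (r - 1) := card_powersetCard _ _

-- The counting step of the cycle closing: `a`, `b` count the head and tail links of a longest path,
-- `a'`, `b'` the path edges at its two endpoints, and `m` the number of path edges.
lemma Nat.false_of_disjoint_counts {n k a b a' b' m : ℕ} (hk : 0 < k) (hm : m ≤ n - 1)
    (hC : 0 < ((n + 1) / 2 - 1).choose k)
    (hab : a + b ≤ m) (hab' : a + b' ≤ m) (ha'b : a' + b ≤ m)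
    (ha : ((n + 1) / 2 - 1).choose k + (n - 1) ≤ a' + a.choose k)
    (hb : ((n + 1) / 2 - 1).choose k + (n - 1) ≤ b' + b.choose k) : False := by
  wlog hle : a ≤ b generalizing a b a' b'
  · exact this (a := b) (b := a) (a' := b') (b' := a') (by omega) (by omega) (by omega) hb ha
      (by omega)
  have ha_small : a.choose k ≤ ((n + 1) / 2 - 1).choose k := choose_le_choose _ (by omega)
  have hb0 : b = 0 := by omega
  rw [hb0, choose_eq_zero_of_lt hk] at hb
  omega

-- Vertices `v 0, …, v (L - 1)`; edge `e i` joins `v i` to `v (i + 1)`. Values at other indices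
-- are irrelevant.
def IsBergePath (E : Finset (Finset V)) (L : ℕ) (v : ℕ → V) (e : ℕ → Finset V) : Prop :=
  (∀ i < L, ∀ j < L, v i = v j → i = j) ∧
  (∀ i j, i + 1 < L → j + 1 < L → e i = e j → i = j) ∧
  (∀ i, i + 1 < L → e i ∈ E ∧ v i ∈ e i ∧ v (i + 1) ∈ e i)

-- As `IsBergePath`, with the extra edge `e (L - 1)` joining `v (L - 1)` back to `v 0`.
def IsBergeCycle (E : Finset (Finset V)) (L : ℕ) (v : ℕ → V) (e : ℕ → Finset V) : Prop :=
  (∀ i < L, ∀ j < L, v i = v j → i = j) ∧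
  (∀ i < L, ∀ j < L, e i = e j → i = j) ∧
  (∀ i < L, e i ∈ E ∧ v i ∈ e i ∧ v ((i + 1) % L) ∈ e i)

-- The cycle `v 0, …, v i, v (L - 1), v (L - 2), …, v (i + 1)`.
def crossVertices (L i : ℕ) (v : ℕ → V) (j : ℕ) : V :=
  if j ≤ i then v j else v (L + i - j)

def crossEdges (L i : ℕ) (e : ℕ → Finset V) (F G : Finset V) (j : ℕ) : Finset V :=
  if j < i then e j else if j = i then G else if j + 1 < L then e (L + i - j - 1) else F

namespace IsBergePath

variable {E : Finset (Finset V)} {L : ℕ} {v : ℕ → V} {e : ℕ → Finset V}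

lemma of_length_one (E : Finset (Finset V)) (x : V) (e : ℕ → Finset V) :
    IsBergePath E 1 (fun _ => x) e :=
  ⟨fun _ _ _ _ _ => by omega, fun _ _ _ _ _ => by omega, fun _ _ => by omega⟩

lemma length_le_card [Fintype V] (h : IsBergePath E L v e) : L ≤ Fintype.card V := by
  simpa using Fintype.card_le_of_injective (fun i : Fin L => v i)
    fun i j hij => Fin.ext (h.1 i i.isLt j j.isLt hij)

lemma cons (h : IsBergePath E L v e) {f : Finset V} (hfE : f ∈ E)
    (hfe : ∀ i, i + 1 < L → f ≠ e i) (hv : v 0 ∈ f) {w : V} (hw : w ∈ f)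
    (hwv : ∀ j < L, w ≠ v j) :
    IsBergePath E (L + 1) (fun i => if i = 0 then w else v (i - 1))
      (fun i => if i = 0 then f else e (i - 1)) := by
  obtain ⟨hvinj, heinj, hmem⟩ := h
  refine ⟨fun i hi j hj hij => ?_, fun i j hi hj hij => ?_, fun i hi => ?_⟩
  · dsimp only at hij
    split_ifs at hij
    · omega
    · exact absurd hij (hwv _ (by omega))
    · exact absurd hij.symm (hwv _ (by omega))
    · have := hvinj _ (by omega) _ (by omega) hij; omega
  · dsimp only at hij
    split_ifs at hij
    · omega
    · exact absurd hij (hfe _ (by omega))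
    · exact absurd hij.symm (hfe _ (by omega))
    · have := heinj _ _ (by omega) (by omega) hij; omega
  · rcases i with _ | i
    · exact ⟨hfE, hw, hv⟩
    · simpa using hmem i (by omega)

lemma snoc (h : IsBergePath E L v e) {f : Finset V} (hfE : f ∈ E)
    (hfe : ∀ i, i + 1 < L → f ≠ e i) (hv : v (L - 1) ∈ f) {w : V} (hw : w ∈ f)
    (hwv : ∀ j < L, w ≠ v j) :
    IsBergePath E (L + 1) (fun i => if i < L then v i else w)
      (fun i => if i + 1 < L then e i else f) := by
  obtain ⟨hvinj, heinj, hmem⟩ := h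
  refine ⟨fun i hi j hj hij => ?_, fun i j hi hj hij => ?_, fun i hi => ?_⟩
  · dsimp only at hij
    split_ifs at hij
    · exact hvinj _ ‹_› _ ‹_› hij
    · exact absurd hij.symm (hwv _ ‹_›)
    · exact absurd hij (hwv _ ‹_›)
    · omega
  · dsimp only at hij
    split_ifs at hij
    · exact heinj _ _ ‹_› ‹_› hij
    · exact absurd hij.symm (hfe _ ‹_›)
    · exact absurd hij (hfe _ ‹_›)
    · omega
  · by_cases hi' : i + 1 < L
    · simpa [hi', show i < L by omega] using hmem i hi'
    · obtain rfl : i = L - 1 := by omega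
      simpa [show L - 1 < L by omega, show ¬ L - 1 + 1 < L by omega] using ⟨hfE, hv, hw⟩

lemma isBergeCycle_close (h : IsBergePath E L v e) {f : Finset V} (hfE : f ∈ E)
    (hfe : ∀ i, i + 1 < L → f ≠ e i) (h0 : v 0 ∈ f) (hlast : v (L - 1) ∈ f) :
    IsBergeCycle E L v (fun i => if i + 1 < L then e i else f) := by
  obtain ⟨hvinj, heinj, hmem⟩ := h
  refine ⟨hvinj, fun i hi j hj hij => ?_, fun i hi => ?_⟩
  · dsimp only at hij
    split_ifs at hij
    · exact heinj _ _ ‹_› ‹_› hij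
    · exact absurd hij.symm (hfe _ ‹_›)
    · exact absurd hij (hfe _ ‹_›)
    · omega
  · by_cases hi' : i + 1 < L
    · simpa [hi', Nat.mod_eq_of_lt hi'] using hmem i hi'
    · obtain rfl : i = L - 1 := by omega
      simpa [show L - 1 + 1 = L by omega] using ⟨hfE, hlast, h0⟩

lemma isBergeCycle_cross (h : IsBergePath E L v e) {i : ℕ} (hi : i + 1 < L) {F G : Finset V}
    (hFE : F ∈ E) (hGE : G ∈ E) (hFG : F ≠ G) (hF0 : v 0 ∈ F) (hF1 : v (i + 1) ∈ F)
    (hG1 : v i ∈ G) (hGlast : v (L - 1) ∈ G)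
    (hnew : ∀ j, j + 1 < L → j ≠ i → F ≠ e j ∧ G ≠ e j) :
    IsBergeCycle E L (crossVertices L i v) (crossEdges L i e F G) := by
  obtain ⟨hvinj, heinj, hmem⟩ := h
  refine ⟨fun a ha b hb hab => ?_, fun a ha b hb hab => ?_, fun j hj => ?_⟩
  · unfold crossVertices at hab
    split_ifs at hab <;>
      first
      | exact hvinj _ (by omega) _ (by omega) hab
      | have := hvinj _ (by omega) _ (by omega) hab; omega
  · unfold crossEdges at hab
    split_ifs at hab <;>
      first
      | omega
      | exact heinj _ _ (by omega) (by omega) hab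
      | have := heinj _ _ (by omega) (by omega) hab; omega
      | exact absurd hab.symm (hnew _ (by omega) (by omega)).2
      | exact absurd hab (hnew _ (by omega) (by omega)).2
      | exact absurd hab.symm (hnew _ (by omega) (by omega)).1
      | exact absurd hab (hnew _ (by omega) (by omega)).1
      | exact absurd hab.symm hFG
      | exact absurd hab hFG
  · unfold crossVertices crossEdges
    rcases lt_trichotomy j i with hji | rfl | hij
    · simpa [hji, hji.le, Nat.mod_eq_of_lt (show j + 1 < L by omega), Nat.succ_le_of_lt hji]
        using hmem j (by omega)
    · simpa [Nat.mod_eq_of_lt hi, show L + j - (j + 1) = L - 1 by omega]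
        using ⟨hGE, hG1, hGlast⟩
    · by_cases hj' : j + 1 < L
      · obtain ⟨k, hk1, hk2⟩ : ∃ k, L + i - j = k + 1 ∧ L + i - (j + 1) = k :=
          ⟨L + i - j - 1, by omega, by omega⟩
        simp only [Nat.mod_eq_of_lt hj', if_neg (show ¬ j < i by omega), if_neg hij.ne',
          if_pos hj', if_neg (show ¬ j ≤ i by omega), if_neg (show ¬ j + 1 ≤ i by omega), hk1,
          hk2, Nat.add_sub_cancel]
        obtain ⟨hkE, hk, hk'⟩ := hmem k (by omega)
        exact ⟨hkE, hk', hk⟩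
      · obtain rfl : j = L - 1 := by omega
        simpa [show ¬ L - 1 < i by omega, show L - 1 ≠ i by omega, hj',
          show ¬ L - 1 ≤ i by omega, show L - 1 + 1 = L by omega,
          show L + i - (L - 1) = i + 1 by omega] using ⟨hFE, hF1, hF0⟩

end IsBergePath

lemma image_range_crossVertices [DecidableEq V] (L i : ℕ) (v : ℕ → V) :
    (range L).image (crossVertices L i v) = (range L).image v := by
  ext x
  simp only [mem_image, mem_range, crossVertices]
  constructor
  · rintro ⟨j, hj, rfl⟩
    split_ifs
    · exact ⟨j, hj, rfl⟩
    · exact ⟨L + i - j, by omega, rfl⟩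
  · rintro ⟨k, hk, rfl⟩
    by_cases hki : k ≤ i
    · exact ⟨k, hk, if_pos hki⟩
    · refine ⟨L + i - k, by omega, ?_⟩
      rw [if_neg (by omega), show L + i - (L + i - k) = k by omega]

namespace IsBergeCycle

variable {E : Finset (Finset V)} {L : ℕ} {v : ℕ → V} {e : ℕ → Finset V}

lemma isBergePath (h : IsBergeCycle E L v e) : IsBergePath E L v e :=
  ⟨h.1, fun i j hi hj => h.2.1 i (by omega) j (by omega),
    fun i hi => by simpa [Nat.mod_eq_of_lt hi] using h.2.2 i (by omega)⟩

lemma rotate (h : IsBergeCycle E L v e) (t : ℕ) :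
    IsBergeCycle E L (fun j => v ((t + j) % L)) (fun j => e ((t + j) % L)) := by
  obtain ⟨hvinj, heinj, hmem⟩ := h
  refine ⟨fun i hi j hj hij => ?_, fun i hi j hj hij => ?_, fun i hi => ?_⟩
  · exact (Nat.ModEq.add_left_cancel' t
      (hvinj _ (Nat.mod_lt _ (by omega)) _ (Nat.mod_lt _ (by omega)) hij)).eq_of_lt_of_lt hi hj
  · exact (Nat.ModEq.add_left_cancel' t
      (heinj _ (Nat.mod_lt _ (by omega)) _ (Nat.mod_lt _ (by omega)) hij)).eq_of_lt_of_lt hi hj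
  · have := hmem _ (Nat.mod_lt (t + i) (by omega))
    simpa only [Nat.mod_add_mod, add_assoc, Nat.add_mod_mod] using this

end IsBergeCycle

-- Equivalent to maximality of `L`, since a longer Berge path truncates to one with `L + 1`
-- vertices.
def IsLongestBergePath (E : Finset (Finset V)) (L : ℕ) (v : ℕ → V) (e : ℕ → Finset V) :
    Prop :=
  IsBergePath E L v e ∧ ∀ v' e', ¬ IsBergePath E (L + 1) v' e'

lemma exists_isLongestBergePath [Fintype V] [Nonempty V] (E : Finset (Finset V)) :
    ∃ L v e, IsLongestBergePath E L v e := by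
  classical
  set P : ℕ → Prop := fun L => ∃ v e, IsBergePath E L v e
  have hP1 : P 1 := ⟨_, _, .of_length_one E (Classical.arbitrary V) fun _ => ∅⟩
  obtain ⟨v, e, hP⟩ := Nat.findGreatest_spec (Fintype.card_pos (α := V)) hP1
  refine ⟨_, v, e, hP, fun v' e' hlonger => ?_⟩
  exact Nat.findGreatest_is_greatest (Nat.lt_succ_self _) hlonger.length_le_card
    ⟨v', e', hlonger⟩

lemma IsLongestBergePath.one_le_length [Nonempty V] {E : Finset (Finset V)} {L : ℕ}
    {v : ℕ → V} {e : ℕ → Finset V} (hP : IsLongestBergePath E L v e) : 1 ≤ L := by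
  by_contra! hL
  obtain rfl : L = 0 := by omega
  exact hP.2 _ _ (.of_length_one E (Classical.arbitrary V) fun _ => ∅)

section OffPathEdges

variable [DecidableEq V] {E : Finset (Finset V)} {L : ℕ} {v : ℕ → V} {e : ℕ → Finset V}

def offPathEdges (E : Finset (Finset V)) (L : ℕ) (e : ℕ → Finset V) (x : V) :
    Finset (Finset V) :=
  {s ∈ E | x ∈ s} \ (range (L - 1)).image e

def incidentPathEdges (L : ℕ) (e : ℕ → Finset V) (x : V) : Finset ℕ :=
  {i ∈ range (L - 1) | x ∈ e i}

lemma mem_offPathEdges {s : Finset V} {x : V} :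
    s ∈ offPathEdges E L e x ↔ s ∈ E ∧ x ∈ s ∧ ∀ i, i + 1 < L → s ≠ e i := by
  simp only [offPathEdges, mem_sdiff, mem_filter, mem_image, mem_range, not_exists, not_and,
    and_assoc]
  refine and_congr_right fun _ => and_congr_right fun _ => forall_congr' fun i => ?_
  rw [ne_comm]
  exact imp_congr_left (by omega)

lemma card_filter_mem_le_card_incidentPathEdges_add (E : Finset (Finset V)) (L : ℕ)
    (e : ℕ → Finset V) (x : V) :
    #{s ∈ E | x ∈ s} ≤ #(incidentPathEdges L e x) + #(offPathEdges E L e x) := by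
  rw [offPathEdges, ← card_inter_add_card_sdiff {s ∈ E | x ∈ s} ((range (L - 1)).image e)]
  refine Nat.add_le_add_right (le_trans (card_le_card fun s hs => ?_) (card_image_le (f := e))) _
  obtain ⟨hs, hse⟩ := mem_inter.1 hs
  obtain ⟨i, hi, rfl⟩ := mem_image.1 hse
  exact mem_image_of_mem e (mem_filter.2 ⟨hi, (mem_filter.1 hs).2⟩)

def headLinks (E : Finset (Finset V)) (L : ℕ) (v : ℕ → V) (e : ℕ → Finset V) :
    Finset ℕ :=
  {i ∈ range (L - 1) | ∃ s ∈ offPathEdges E L e (v 0), v (i + 1) ∈ s}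

def tailLinks (E : Finset (Finset V)) (L : ℕ) (v : ℕ → V) (e : ℕ → Finset V) :
    Finset ℕ :=
  {i ∈ range (L - 1) | ∃ s ∈ offPathEdges E L e (v (L - 1)), v i ∈ s}

end OffPathEdges

namespace IsBergePath

variable [DecidableEq V] {E : Finset (Finset V)} {L : ℕ} {v : ℕ → V} {e : ℕ → Finset V}

lemma exists_isBergeCycle_cross (h : IsBergePath E L v e) {i : ℕ} (hi : i + 1 < L)
    {F G : Finset V} (hFE : F ∈ E) (hGE : G ∈ E) (hFG : F ≠ G) (hF0 : v 0 ∈ F)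
    (hF1 : v (i + 1) ∈ F) (hG1 : v i ∈ G) (hGlast : v (L - 1) ∈ G)
    (hnew : ∀ j, j + 1 < L → j ≠ i → F ≠ e j ∧ G ≠ e j) :
    ∃ cv ce, IsBergeCycle E L cv ce ∧ (range L).image cv = (range L).image v :=
  ⟨_, _, h.isBergeCycle_cross hi hFE hGE hFG hF0 hF1 hG1 hGlast hnew,
    image_range_crossVertices L i v⟩

lemma disjoint_links_of_not_exists_isBergeCycle (h : IsBergePath E L v e)
    (hclose : ∀ s ∈ offPathEdges E L e (v 0), v (L - 1) ∉ s)
    (hcyc : ¬ ∃ cv ce, IsBergeCycle E L cv ce ∧ (range L).image cv = (range L).image v) :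
    Disjoint (headLinks E L v e) (tailLinks E L v e) ∧
      Disjoint (headLinks E L v e) (incidentPathEdges L e (v (L - 1))) ∧
      Disjoint (incidentPathEdges L e (v 0)) (tailLinks E L v e) := by
  have heinj := h.2.1
  refine ⟨disjoint_left.2 fun i hA hB => ?_, disjoint_left.2 fun i hA hB => ?_,
    disjoint_left.2 fun i hA hB => ?_⟩
  · obtain ⟨hi, F, hF, hF1⟩ := mem_filter.1 hA
    obtain ⟨-, G, hG, hG1⟩ := mem_filter.1 hB
    obtain ⟨hFE, hF0, hFe⟩ := mem_offPathEdges.1 hF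
    obtain ⟨hGE, hGlast, hGe⟩ := mem_offPathEdges.1 hG
    have hFG : F ≠ G := by rintro rfl; exact hclose F hF hGlast
    exact hcyc (h.exists_isBergeCycle_cross (Nat.add_lt_of_lt_sub (mem_range.1 hi)) hFE hGE hFG
      hF0 hF1 hG1 hGlast fun j hj _ => ⟨hFe j hj, hGe j hj⟩)
  · obtain ⟨hi, F, hF, hF1⟩ := mem_filter.1 hA
    obtain ⟨hFE, hF0, hFe⟩ := mem_offPathEdges.1 hF
    have hi : i + 1 < L := Nat.add_lt_of_lt_sub (mem_range.1 hi)
    obtain ⟨heE, hvi, -⟩ := h.2.2 i hi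
    exact hcyc (h.exists_isBergeCycle_cross hi hFE heE (hFe i hi) hF0 hF1 hvi
      (mem_filter.1 hB).2 fun j hj hji => ⟨hFe j hj, fun hij => hji (heinj j i hj hi hij.symm)⟩)
  · obtain ⟨hi, G, hG, hG1⟩ := mem_filter.1 hB
    obtain ⟨hGE, hGlast, hGe⟩ := mem_offPathEdges.1 hG
    have hi : i + 1 < L := Nat.add_lt_of_lt_sub (mem_range.1 hi)
    obtain ⟨heE, -, hvi⟩ := h.2.2 i hi
    exact hcyc (h.exists_isBergeCycle_cross hi heE hGE (hGe i hi).symm (mem_filter.1 hA).2 hvi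
      hG1 hGlast fun j hj hji => ⟨fun hij => hji (heinj j i hj hi hij.symm), hGe j hj⟩)

end IsBergePath

namespace IsLongestBergePath

variable [DecidableEq V] {E : Finset (Finset V)} {L r : ℕ} {v : ℕ → V} {e : ℕ → Finset V}

lemma exists_eq_of_mem_offPathEdges_head (hP : IsLongestBergePath E L v e) {s : Finset V}
    (hs : s ∈ offPathEdges E L e (v 0)) {x : V} (hx : x ∈ s) : ∃ j < L, x = v j := by
  by_contra! hxv
  obtain ⟨hsE, hv, hse⟩ := mem_offPathEdges.1 hs
  exact hP.2 _ _ (hP.1.cons hsE hse hv hx hxv)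

lemma exists_eq_of_mem_offPathEdges_tail (hP : IsLongestBergePath E L v e) {s : Finset V}
    (hs : s ∈ offPathEdges E L e (v (L - 1))) {x : V} (hx : x ∈ s) : ∃ j < L, x = v j := by
  by_contra! hxv
  obtain ⟨hsE, hv, hse⟩ := mem_offPathEdges.1 hs
  exact hP.2 _ _ (hP.1.snoc hsE hse hv hx hxv)

lemma card_offPathEdges_head_le (hP : IsLongestBergePath E L v e) (hE : ∀ s ∈ E, #s = r) :
    #(offPathEdges E L e (v 0)) ≤ (#(headLinks E L v e)).choose (r - 1) := by
  refine le_trans (card_le_choose_of_erase_subset (x := v 0)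
    (N := (headLinks E L v e).image fun i => v (i + 1)) (fun s hs => ?_) fun s hs y hy => ?_)
    (Nat.choose_le_choose _ card_image_le)
  · obtain ⟨hsE, hv, -⟩ := mem_offPathEdges.1 hs
    exact ⟨hv, hE s hsE⟩
  · obtain ⟨hy0, hys⟩ := mem_erase.1 hy
    obtain ⟨j, hj, rfl⟩ := hP.exists_eq_of_mem_offPathEdges_head hs hys
    have hj0 : j ≠ 0 := by rintro rfl; exact hy0 rfl
    obtain ⟨i, rfl⟩ : ∃ i, j = i + 1 := ⟨j - 1, by omega⟩
    exact mem_image_of_mem _ (mem_filter.2 ⟨mem_range.2 (by omega), s, hs, hys⟩)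

lemma card_offPathEdges_tail_le (hP : IsLongestBergePath E L v e) (hE : ∀ s ∈ E, #s = r) :
    #(offPathEdges E L e (v (L - 1))) ≤ (#(tailLinks E L v e)).choose (r - 1) := by
  refine le_trans (card_le_choose_of_erase_subset (x := v (L - 1))
    (N := (tailLinks E L v e).image v) (fun s hs => ?_) fun s hs y hy => ?_)
    (Nat.choose_le_choose _ card_image_le)
  · obtain ⟨hsE, hv, -⟩ := mem_offPathEdges.1 hs
    exact ⟨hv, hE s hsE⟩
  · obtain ⟨hylast, hys⟩ := mem_erase.1 hy
    obtain ⟨j, hj, rfl⟩ := hP.exists_eq_of_mem_offPathEdges_tail hs hys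
    have hjL : j ≠ L - 1 := fun h => hylast (h ▸ rfl)
    exact mem_image_of_mem _ (mem_filter.2 ⟨mem_range.2 (by omega), s, hs, hys⟩)

lemma exists_isBergeCycle [Fintype V] (hP : IsLongestBergePath E L v e) (hr : 2 ≤ r)
    (hn : 2 * r - 2 < Fintype.card V) (hE : ∀ s ∈ E, #s = r)
    (hdeg : ∀ x, ((Fintype.card V + 1) / 2 - 1).choose (r - 1) + (Fintype.card V - 1) ≤
      #{s ∈ E | x ∈ s}) :
    ∃ cv ce, IsBergeCycle E L cv ce ∧ (range L).image cv = (range L).image v := by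
  by_cases hclose : ∃ s ∈ offPathEdges E L e (v 0), v (L - 1) ∈ s
  · obtain ⟨s, hs, hlast⟩ := hclose
    obtain ⟨hsE, h0, hse⟩ := mem_offPathEdges.1 hs
    exact ⟨v, _, hP.1.isBergeCycle_close hsE hse h0 hlast, rfl⟩
  push Not at hclose
  by_contra hcyc
  obtain ⟨hAB, hAB', hA'B⟩ := hP.1.disjoint_links_of_not_exists_isBergeCycle hclose hcyc
  have hsub : ∀ x, incidentPathEdges L e x ⊆ range (L - 1) := fun x => filter_subset _ _
  have hA : headLinks E L v e ⊆ range (L - 1) := filter_subset _ _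
  have hB : tailLinks E L v e ⊆ range (L - 1) := filter_subset _ _
  have hhead := (hdeg (v 0)).trans
    ((card_filter_mem_le_card_incidentPathEdges_add E L e (v 0)).trans
      (Nat.add_le_add_left (hP.card_offPathEdges_head_le hE) _))
  have htail := (hdeg (v (L - 1))).trans
    ((card_filter_mem_le_card_incidentPathEdges_add E L e (v (L - 1))).trans
      (Nat.add_le_add_left (hP.card_offPathEdges_tail_le hE) _))
  refine Nat.false_of_disjoint_counts (m := L - 1) (by omega)
    (by have := hP.1.length_le_card; omega) (Nat.choose_pos (by omega)) ?_ ?_ ?_ hhead htail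
  · simpa using card_add_card_le_of_disjoint hAB hA hB
  · simpa using card_add_card_le_of_disjoint hAB' hA (hsub _)
  · simpa using card_add_card_le_of_disjoint hA'B (hsub _) hB

lemma half_card_lt_length [Fintype V] (hP : IsLongestBergePath E L v e) (hL : 1 ≤ L)
    (hLn : L < Fintype.card V) (hE : ∀ s ∈ E, #s = r)
    (hdeg : ∀ x, ((Fintype.card V + 1) / 2 - 1).choose (r - 1) + (Fintype.card V - 1) ≤
      #{s ∈ E | x ∈ s}) :
    (Fintype.card V + 1) / 2 + 1 ≤ L := by
  have hrange : ∀ S ⊆ range (L - 1), #S ≤ L - 1 := fun S hS =>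
    (card_le_card hS).trans_eq (card_range _)
  have hdeg0 := (hdeg (v 0)).trans
    ((card_filter_mem_le_card_incidentPathEdges_add E L e (v 0)).trans
      (Nat.add_le_add (hrange _ (filter_subset _ _))
        ((hP.card_offPathEdges_head_le hE).trans
          (Nat.choose_le_choose _ (hrange _ (filter_subset _ _))))))
  by_contra! hshort
  have := Nat.choose_le_choose (r - 1) (show L - 1 ≤ (Fintype.card V + 1) / 2 - 1 by omega)
  omega

end IsLongestBergePath

lemma IsBergeCycle.card_filter_mem_le [DecidableEq V] [Fintype V] {E : Finset (Finset V)}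
    {L r : ℕ} {v : ℕ → V} {e : ℕ → Finset V} (hC : IsBergeCycle E L v e) (hE : ∀ s ∈ E, #s = r)
    (hmax : ∀ v' e', ¬ IsBergePath E (L + 1) v' e') {w : V} (hw : w ∉ (range L).image v) :
    #{s ∈ E | w ∈ s} ≤ L + (Fintype.card V - L - 1).choose (r - 1) := by
  set VC := (range L).image v
  have hVC : #VC = L := by
    rw [card_image_of_injOn fun i hi j hj hij => hC.1 i (mem_range.1 hi) j (mem_range.1 hj) hij,
      card_range]
  have hsplit :
      {s ∈ E | w ∈ s} ⊆ (range L).image e ∪ {s ∈ E | w ∈ s ∧ ∀ x ∈ s, x ∉ VC} := by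
    intro s hs
    obtain ⟨hsE, hws⟩ := mem_filter.1 hs
    by_contra hout
    simp only [mem_union, mem_image, mem_range, mem_filter, not_or, not_exists, not_and,
      not_forall, not_not] at hout
    obtain ⟨hse, hmeet⟩ := hout
    obtain ⟨x, hxs, hxVC⟩ := hmeet hsE hws
    obtain ⟨t, ht, rfl⟩ := mem_image.1 hxVC
    have hL : 0 < L := by rw [mem_range] at ht; omega
    refine hmax _ _ ((hC.rotate t).isBergePath.cons hsE (fun i hi => ?_) ?_ hws fun j hj => ?_)
    · exact fun h => hse _ (Nat.mod_lt _ hL) h.symm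
    · simpa [Nat.mod_eq_of_lt (mem_range.1 ht)] using hxs
    · exact fun h => hw (mem_image.2 ⟨_, mem_range.2 (Nat.mod_lt _ hL), h.symm⟩)
  have houter :
      #{s ∈ E | w ∈ s ∧ ∀ x ∈ s, x ∉ VC} ≤ (Fintype.card V - L - 1).choose (r - 1) := by
    have hN : #((univ \ VC).erase w) = Fintype.card V - L - 1 := by
      rw [card_erase_of_mem (mem_sdiff.2 ⟨mem_univ w, hw⟩),
        card_sdiff_of_subset (subset_univ _), card_univ, hVC]
    refine hN ▸ card_le_choose_of_erase_subset (x := w) (fun s hs => ?_) fun s hs x hx => ?_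
    · obtain ⟨hsE, hws, -⟩ := mem_filter.1 hs
      exact ⟨hws, hE s hsE⟩
    · obtain ⟨hxw, hxs⟩ := mem_erase.1 hx
      exact mem_erase.2 ⟨hxw, mem_sdiff.2 ⟨mem_univ x, (mem_filter.1 hs).2.2 x hxs⟩⟩
  calc #{s ∈ E | w ∈ s}
      ≤ #((range L).image e) + #{s ∈ E | w ∈ s ∧ ∀ x ∈ s, x ∉ VC} :=
        (card_le_card hsplit).trans (card_union_le _ _)
    _ ≤ L + (Fintype.card V - L - 1).choose (r - 1) :=
        Nat.add_le_add (card_image_le.trans_eq (card_range L)) houter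

theorem exists_isBergeCycle_card [DecidableEq V] [Fintype V]
    {E : Finset (Finset V)} {r : ℕ} (hr : 2 ≤ r) (hn : 2 * r - 2 < Fintype.card V)
    (hE : ∀ s ∈ E, #s = r)
    (hdeg : ∀ x, ((Fintype.card V + 1) / 2 - 1).choose (r - 1) + (Fintype.card V - 1) ≤
      #{s ∈ E | x ∈ s}) :
    ∃ v e, IsBergeCycle E (Fintype.card V) v e := by
  have : Nonempty V := Fintype.card_pos_iff.1 (by omega)
  obtain ⟨L, v, e, hP⟩ := exists_isLongestBergePath E
  obtain ⟨cv, ce, hC, himage⟩ := hP.exists_isBergeCycle hr hn hE hdeg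
  obtain hLn | hLn := hP.1.length_le_card.eq_or_lt
  · exact ⟨cv, ce, hLn ▸ hC⟩
  have hlong := hP.half_card_lt_length hP.one_le_length hLn hE hdeg
  obtain ⟨w, -, hw⟩ := exists_mem_notMem_of_card_lt_card (s := (range L).image cv) (t := univ)
    (card_image_le.trans_lt (by simpa using hLn))
  have hw_deg := (hdeg w).trans (hC.card_filter_mem_le hE hP.2 hw)
  have := Nat.choose_lt_choose_of_lt (a := Fintype.card V - L - 1) (by omega) (by omega)
    (show r - 1 ≤ (Fintype.card V + 1) / 2 - 1 by omega)
  omega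

lemma IsBergeCycle.isHamBergeCycle {n : ℕ} [NeZero n] {E : Finset (Finset (Fin n))}
    {v : ℕ → Fin n} {e : ℕ → Finset (Fin n)} (h : IsBergeCycle E n v e) :
    IsHamBergeCycle n E (fun i => v i) (fun i => e i) := by
  obtain ⟨hvinj, heinj, hmem⟩ := h
  refine ⟨Finite.injective_iff_bijective.1 fun i j hij => Fin.ext (hvinj i i.isLt j j.isLt hij),
    fun i j hij => Fin.ext (heinj i i.isLt j j.isLt hij), fun i => (hmem i i.isLt).1,
    fun i => ⟨(hmem i i.isLt).2.1, ?_⟩⟩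
  simpa [Fin.val_add, Fin.val_one', Nat.add_mod_mod] using (hmem i i.isLt).2.2

theorem stmt1 (r n : ℕ) [NeZero n] (hr : 3 ≤ r) (hn : 2 * r - 2 < n)
    (E : Finset (Finset (Fin n))) (hE : ∀ s ∈ E, s.card = r)
    (hdeg : ∀ x : Fin n,
      (((n + 1) / 2 - 1).choose (r - 1)) + (n - 1) ≤ (E.filter (fun s => x ∈ s)).card) :
    ∃ v e, IsHamBergeCycle n E v e := by
  obtain ⟨v, e, h⟩ := exists_isBergeCycle_card (V := Fin n) (by omega) (by simpa using hn) hE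
    (by simpa using hdeg)
  simp only [Fintype.card_fin] at h
  exact ⟨_, _, h.isHamBergeCycle⟩
end

section
/- Fix r ≥ 3, γ ∈ (0,1) and c > 1, and choose ε ≤ 2^{r−3}γ with 1 + ε < c. Let 𝓗 be an (ε,p)-pseudorandom r-uniform hypergraph on n vertices (n large, p ≥ ln^{cr} n / n^{r−1}), H ⊆ 𝓗, and let U₁, U₂ be disjoint vertex subsets with |U₁| = |U₂| = m ≥ n/ln^c n, such that every vertex of U₁ has at least (2^{1−r} + γ)·p·C(m, r−1) edges of H meeting it in one vertex and U₂ in r−1 vertices, and symmetrically for vertices of U₂ into U₁. Then H contains a (U₁,U₂)-matching. -/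
open Finset

/-- The number of edges of `E` with exactly one vertex in `T` and all other
vertices in `U`. -/
def eBetween (n : ℕ) (E : Finset (Finset (Fin n))) (T U : Finset (Fin n)) : ℕ :=
  (E.filter (fun s => (s ∩ T).card = 1 ∧ s \ T ⊆ U)).card

/-- `(ε,p)`-pseudorandomness of an `r`-uniform hypergraph on `Fin n`. -/
def Pseudorandom (r n : ℕ) (ε p : ℝ) (E : Finset (Finset (Fin n))) : Prop :=
  (∀ T U : Finset (Fin n), Disjoint T U → U.card ≤ T.card →
    (eBetween n E T U : ℝ) ≤
      (1 + ε) * p * T.card * (U.card.choose (r - 1)) +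
        T.card * (Real.log n) ^ ((1 : ℝ) + ε)) ∧
  (∀ T U : Finset (Fin n), Disjoint T U →
    ε * U.card ≤ (T.card : ℝ) → T.card ≤ U.card → (U.card : ℝ) ≤ n / 2 →
    (13 * (Nat.factorial (r - 1)) * Real.log n / (ε ^ 3 * p)) ^
        ((1 : ℝ) / (r - 1)) ≤ (U.card : ℝ) →
    (eBetween n E T U : ℝ) ≤ (1 + ε) * p * T.card * (U.card.choose (r - 1)))

/-- `degIn n E x U` is the number of hyperedges of `E` containing `x` and
otherwise contained in `U`. -/
def degIn (n : ℕ) (E : Finset (Finset (Fin n))) (x : Fin n) (U : Finset (Fin n)) : ℕ :=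
  (E.filter (fun s => x ∈ s ∧ s \ {x} ⊆ U)).card

/-!
Hall's theorem, applied to the bipartite graph on `U₁ ∪ U₂` in which `u` and `v` are adjacent when
some edge of `H` contains both and meets one side in a single vertex and the other in `r - 1`.
Hall's condition only has to be checked for sets of at most `⌈m/2⌉ = (m + 1) / 2` vertices on
either side: a larger deficient `T ⊆ U₁` leaves at least `m - |T| + 1` vertices of `U₂` outside
`N(T)`, and a set of that many (at most `⌈m/2⌉`) has all its neighbours in `U₁ \ T`, too few.

For a small `T` with `|N(T)| < |T|`, every edge counted by the degree condition at `T` lies in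
`e(T, binom(N(T), r - 1))`, so pseudorandomness (i) gives
  `|T| (2^{1-r} + γ) p C(m, r-1) ≤ (1 + ε) p |T| C(⌈m/2⌉, r-1) + |T| ln^{1+ε} n`.
For large `n` this fails: `(1 + ε) C(⌈m/2⌉, r-1) ≤ (2^{1-r} + γ/2) C(m, r-1)` since
`ε ≤ 2^{r-3} γ`, and `ln^{1+ε} n < (γ/2) p C(m, r-1)` since `p C(m, r-1) ≳ ln^c n` with `c > 1 + ε`.
-/

open Filter Real Topology

lemma Nat.descFactorial_mul_pow_le_pow_mul_descFactorial {k m : ℕ} (h : k ≤ m) (j : ℕ) :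
    k.descFactorial j * m ^ j ≤ k ^ j * m.descFactorial j := by
  have hpow (x : ℕ) : x ^ j = ∏ _i ∈ range j, x := by simp
  rw [hpow, hpow, Nat.descFactorial_eq_prod_range, Nat.descFactorial_eq_prod_range,
    ← prod_mul_distrib, ← prod_mul_distrib]
  refine prod_le_prod' fun i _ => ?_
  calc (k - i) * m = k * m - i * m := Nat.sub_mul _ _ _
    _ ≤ k * m - k * i := Nat.sub_le_sub_left (by rw [mul_comm k]; exact Nat.mul_le_mul_left i h) _
    _ = k * (m - i) := (Nat.mul_sub _ _ _).symm

lemma Nat.choose_mul_pow_le_pow_mul_choose {k m : ℕ} (h : k ≤ m) (j : ℕ) :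
    k.choose j * m ^ j ≤ k ^ j * m.choose j := by
  have := Nat.descFactorial_mul_pow_le_pow_mul_descFactorial h j
  rw [Nat.descFactorial_eq_factorial_mul_choose, Nat.descFactorial_eq_factorial_mul_choose,
    mul_assoc, mul_left_comm (k ^ j)] at this
  exact Nat.le_of_mul_le_mul_left this j.factorial_pos

lemma choose_half_le (j : ℕ) {m : ℕ} (hm : 0 < m) :
    (((m + 1) / 2).choose j : ℝ) ≤ (((m : ℝ) + 1) / (2 * m)) ^ j * m.choose j := by
  have hhalf : (((m + 1) / 2 : ℕ) : ℝ) ≤ ((m : ℝ) + 1) / 2 := by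
    simpa using Nat.cast_div_le (m := m + 1) (n := 2) (α := ℝ)
  have hnat : ((((m + 1) / 2).choose j * m ^ j : ℕ) : ℝ) ≤
      (((m + 1) / 2) ^ j * m.choose j : ℕ) :=
    Nat.cast_le.2 (Nat.choose_mul_pow_le_pow_mul_choose (by omega) j)
  push_cast at hnat
  have hm' : (0 : ℝ) < (m : ℝ) ^ j := by positivity
  rw [← mul_le_mul_iff_of_pos_right hm']
  calc (((m + 1) / 2).choose j : ℝ) * (m : ℝ) ^ j
      ≤ (((m + 1) / 2 : ℕ) : ℝ) ^ j * m.choose j := hnat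
    _ ≤ (((m : ℝ) + 1) / 2) ^ j * m.choose j := by gcongr
    _ = (((m : ℝ) + 1) / (2 * m)) ^ j * m.choose j * (m : ℝ) ^ j := by
      rw [div_pow, div_pow, mul_pow]; field_simp

lemma eventually_mul_choose_half_le {a b : ℝ} {j : ℕ} (ha : 0 ≤ a) (hab : a / 2 ^ j < b) :
    ∀ᶠ m : ℕ in atTop, a * ((m + 1) / 2).choose j ≤ b * m.choose j := by
  have hlim :
      Tendsto (fun m : ℕ => a * (((m : ℝ) + 1) / (2 * m)) ^ j) atTop (𝓝 (a / 2 ^ j)) := by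
    have : Tendsto (fun m : ℕ => 1 / 2 + 1 / 2 * (1 / (m : ℝ))) atTop (𝓝 (1 / 2)) := by
      have := (tendsto_one_div_atTop_nhds_zero_nat.const_mul (1 / 2 : ℝ)).const_add (1 / 2 : ℝ)
      rwa [mul_zero, add_zero] at this
    refine ((this.pow j).const_mul a).congr' ?_ |>.trans (by rw [div_pow, one_pow, mul_one_div])
    filter_upwards [eventually_gt_atTop 0] with m hm
    congr 2
    field_simp
  filter_upwards [hlim.eventually_lt_const hab, eventually_gt_atTop 0] with m hlt hm
  calc a * ((m + 1) / 2).choose j ≤ a * ((((m : ℝ) + 1) / (2 * m)) ^ j * m.choose j) := by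
        gcongr; exact choose_half_le j hm
    _ ≤ b * m.choose j := by rw [← mul_assoc]; gcongr

lemma pow_div_factorial_le_choose {m j : ℕ} (h : 2 * j ≤ m) :
    ((m : ℝ) / 2) ^ j / j.factorial ≤ m.choose j := by
  have hq : (m : ℝ) / 2 ≤ ((m + 1 - j : ℕ) : ℝ) := by
    rw [Nat.cast_sub (by omega)]; push_cast
    have : (2 * j : ℝ) ≤ m := by exact_mod_cast h
    linarith
  have hdesc : (((m + 1 - j) ^ j : ℕ) : ℝ) ≤ (j.factorial * m.choose j : ℕ) := by
    rw [← Nat.descFactorial_eq_factorial_mul_choose]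
    exact_mod_cast Nat.pow_sub_le_descFactorial m j
  push_cast at hdesc
  rw [div_le_iff₀ (by positivity), mul_comm]
  exact (pow_le_pow_left₀ (by positivity) hq j).trans hdesc

lemma tendsto_natCast_div_log_rpow_atTop (c : ℝ) :
    Tendsto (fun n : ℕ => (n : ℝ) / log n ^ c) atTop atTop := by
  have h0 : Tendsto (fun x : ℝ => log x ^ c / x) atTop (𝓝[>] 0) := by
    refine tendsto_nhdsWithin_iff.2 ⟨?_, ?_⟩
    · simpa using (isLittleO_log_rpow_rpow_atTop c one_pos).tendsto_div_nhds_zero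
    · filter_upwards [eventually_gt_atTop 1] with x hx
      have : 0 < log x := log_pos hx
      exact div_pos (rpow_pos_of_pos this c) (by linarith)
  have := (tendsto_inv_nhdsGT_zero.comp h0).comp tendsto_natCast_atTop_atTop
  simpa [Function.comp_def] using this

lemma Filter.Tendsto.eventually_forall_of_le_natCast {α : Type*} {l : Filter α} {f : α → ℝ}
    (hf : Tendsto f l atTop) {P : ℕ → Prop} (hP : ∀ᶠ m in atTop, P m) :
    ∀ᶠ x in l, ∀ m : ℕ, f x ≤ m → P m := by
  obtain ⟨M, hM⟩ := eventually_atTop.1 hP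
  filter_upwards [hf.eventually_ge_atTop M] with x hx m hm
  exact hM m (by exact_mod_cast hx.trans hm)

lemma log_rpow_div_le_mul_choose {n m r : ℕ} {c p : ℝ} (hr : 1 ≤ r) (hL : 0 < log n)
    (h2m : 2 * (r - 1) ≤ m) (hm : n / log n ^ c ≤ m)
    (hp : log n ^ (c * r) / n ^ (r - 1) ≤ p) :
    log n ^ c / (2 ^ (r - 1) * (r - 1).factorial) ≤ p * m.choose (r - 1) := by
  obtain ⟨j, rfl⟩ : ∃ j, r = j + 1 := ⟨r - 1, by omega⟩
  simp only [Nat.add_sub_cancel] at *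
  have hn : (0 : ℝ) < n := by
    rcases n.eq_zero_or_pos with rfl | hn
    · simp at hL
    · exact_mod_cast hn
  set A := log n ^ c with hA
  have hA0 : 0 < A := by positivity
  have hAr : log n ^ (c * ↑(j + 1)) = A * A ^ j := by
    rw [rpow_mul hL.le, rpow_natCast, pow_succ']
  have hp0 : 0 ≤ p := le_trans (by positivity) hp
  calc A / (2 ^ j * j.factorial) = A * A ^ j / n ^ j * ((n / A / 2) ^ j / j.factorial) := by
        rw [div_div, div_pow, mul_pow]
        field_simp
    _ ≤ p * (((m : ℝ) / 2) ^ j / j.factorial) := by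
        rw [← hAr]
        gcongr
    _ ≤ p * m.choose j := by gcongr; exact pow_div_factorial_le_choose h2m

lemma eventually_pseudorandom_bound_lt_degree {r : ℕ} {γ c ε : ℝ} (hr : 3 ≤ r)
    (hγ : 0 < γ) (hε : 0 ≤ 1 + ε) (hε1 : ε ≤ 2 ^ (r - 3) * γ) (hεc : 1 + ε < c) :
    ∀ᶠ n : ℕ in atTop, ∀ (m : ℕ) (p : ℝ), n / log n ^ c ≤ m →
      log n ^ (c * r) / n ^ (r - 1) ≤ p → 0 < p ∧
        (1 + ε) * p * ((m + 1) / 2).choose (r - 1) + log n ^ ((1 : ℝ) + ε) <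
          (1 / 2 ^ (r - 1) + γ) * p * m.choose (r - 1) := by
  set K : ℝ := 2 ^ (r - 1) * (r - 1).factorial
  have hK : 0 < K := by positivity
  have hhalf : (1 + ε) / 2 ^ (r - 1) < 1 / 2 ^ (r - 1) + γ / 2 := by
    have h4 : (2 : ℝ) ^ (r - 1) = 4 * 2 ^ (r - 3) := by
      rw [show r - 1 = r - 3 + 2 by omega, pow_add]; ring
    rw [add_div, h4, add_lt_add_iff_left, div_lt_iff₀ (by positivity)]
    nlinarith [pow_pos (two_pos : (0 : ℝ) < 2) (r - 3)]
  have hlog : Tendsto (fun n : ℕ => log n) atTop atTop :=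
    tendsto_log_atTop.comp tendsto_natCast_atTop_atTop
  filter_upwards [(tendsto_natCast_div_log_rpow_atTop c).eventually_forall_of_le_natCast
      ((eventually_mul_choose_half_le hε hhalf).and (eventually_ge_atTop (2 * (r - 1)))),
    hlog.eventually_gt_atTop 0,
    ((tendsto_rpow_atTop (by linarith : 0 < c - 1 - ε)).comp hlog).eventually_gt_atTop
      (2 * K / γ)]
    with n hlarge hL hLK m p hm hp
  obtain ⟨hchoose, h2m⟩ := hlarge m hm
  have hpC := log_rpow_div_le_mul_choose (by omega) hL h2m hm hp
  have hn : (0 : ℝ) < n := Nat.cast_pos.2 (Nat.pos_of_ne_zero fun h => by simp [h] at hL)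
  have hp0 : 0 < p := lt_of_lt_of_le (div_pos (rpow_pos_of_pos hL _) (by positivity)) hp
  have hsmall : log n ^ ((1 : ℝ) + ε) < γ / 2 * (log n ^ c / K) := by
    have hsplit : log n ^ c = log n ^ ((1 : ℝ) + ε) * log n ^ (c - 1 - ε) := by
      rw [← rpow_add hL]; ring_nf
    rw [Function.comp_apply, div_lt_iff₀ hγ] at hLK
    rw [hsplit, mul_div_assoc, ← mul_assoc, mul_comm (γ / 2), mul_assoc]
    refine lt_mul_of_one_lt_right (by positivity) ?_
    rw [mul_div_assoc', lt_div_iff₀ hK]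
    linarith
  have hhalf_p := mul_le_mul_of_nonneg_left hchoose hp0.le
  have hlog_p := mul_le_mul_of_nonneg_left hpC (half_pos hγ).le
  exact ⟨hp0, by linarith⟩

lemma inter_eq_singleton_of_sdiff_subset {α : Type*} [DecidableEq α] {e T B : Finset α} {u : α}
    (hTB : Disjoint T B) (hue : u ∈ e) (huT : u ∈ T) (he : e \ {u} ⊆ B) : e ∩ T = {u} := by
  ext x
  simp only [mem_inter, mem_singleton]
  constructor
  · rintro ⟨hxe, hxT⟩
    by_contra hxu
    exact disjoint_left.1 hTB hxT (he (mem_sdiff.2 ⟨hxe, by simpa using hxu⟩))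
  · rintro rfl
    exact ⟨hue, huT⟩

lemma inter_eq_sdiff_of_sdiff_subset {α : Type*} [DecidableEq α] {e T B : Finset α} {u : α}
    (hTB : Disjoint T B) (huT : u ∈ T) (he : e \ {u} ⊆ B) : e ∩ B = e \ {u} := by
  ext x
  simp only [mem_inter, Finset.mem_sdiff, mem_singleton]
  constructor
  · rintro ⟨hxe, hxB⟩
    exact ⟨hxe, fun hxu => disjoint_left.1 hTB huT (hxu ▸ hxB)⟩
  · rintro ⟨hxe, hxu⟩
    exact ⟨hxe, he (mem_sdiff.2 ⟨hxe, by simpa using hxu⟩)⟩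

section Hall

variable {α β : Type*} [DecidableEq β] (G : α → β → Prop) [∀ a b, Decidable (G a b)]

lemma card_le_card_filter_of_small_expansion [DecidableEq α] {A : Finset α} {B : Finset β}
    {h : ℕ} (hAB : A.card = B.card) (hBh : B.card ≤ 2 * h)
    (hA : ∀ T ⊆ A, T.card ≤ h → T.card ≤ (B.filter fun v => ∃ u ∈ T, G u v).card)
    (hB : ∀ S ⊆ B, S.card ≤ h → S.card ≤ (A.filter fun u => ∃ v ∈ S, G u v).card)
    {T : Finset α} (hT : T ⊆ A) : T.card ≤ (B.filter fun v => ∃ u ∈ T, G u v).card := by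
  by_contra! hlt
  set N := B.filter fun v => ∃ u ∈ T, G u v
  have hTA := card_le_card hT
  have hTh : h < T.card := by
    by_contra! hTh
    exact hlt.not_ge (hA T hT hTh)
  have hNB : N ⊆ B := filter_subset _ _
  obtain ⟨S, hSN, hScard⟩ : ∃ S ⊆ B \ N, S.card = B.card - T.card + 1 :=
    exists_subset_card_eq (by rw [card_sdiff_of_subset hNB]; omega)
  have hSB : S ⊆ B := hSN.trans sdiff_subset
  have hNS : (A.filter fun u => ∃ v ∈ S, G u v) ⊆ A \ T := by
    intro u hu
    obtain ⟨huA, v, hvS, huv⟩ := mem_filter.1 hu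
    refine Finset.mem_sdiff.2 ⟨huA, fun huT => ?_⟩
    exact (Finset.mem_sdiff.1 (hSN hvS)).2 (mem_filter.2 ⟨hSB hvS, u, huT, huv⟩)
  have h1 := hB S hSB (by omega)
  have h2 := card_le_card hNS
  rw [card_sdiff_of_subset hT] at h2
  omega

lemma exists_injective_of_card_le_card_filter {A : Finset α} {B : Finset β}
    (hall : ∀ T ⊆ A, T.card ≤ (B.filter fun v => ∃ u ∈ T, G u v).card) :
    ∃ f : A → β, Function.Injective f ∧ ∀ u, f u ∈ B ∧ G u (f u) := by
  have hcond : ∀ s : Finset A, s.card ≤ (s.biUnion fun u => B.filter (G u)).card := by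
    intro s
    calc s.card = (s.map (Function.Embedding.subtype _)).card := (card_map _).symm
      _ ≤ (B.filter fun v => ∃ u ∈ s.map (Function.Embedding.subtype _), G u v).card :=
        hall _ fun u hu => by
          obtain ⟨u, -, rfl⟩ := mem_map.1 hu
          exact u.2
      _ ≤ (s.biUnion fun u => B.filter (G u)).card := by
        refine card_le_card fun v hv => ?_
        obtain ⟨hvB, _, hu, huv⟩ := mem_filter.1 hv
        obtain ⟨u, hus, rfl⟩ := mem_map.1 hu
        exact mem_biUnion.2 ⟨u, hus, mem_filter.2 ⟨hvB, huv⟩⟩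
  obtain ⟨f, hf_inj, hf⟩ := (all_card_le_biUnion_card_iff_exists_injective _).1 hcond
  exact ⟨f, hf_inj, fun u => mem_filter.1 (hf u)⟩

end Hall

section Hypergraph

variable {α : Type*} [DecidableEq α]

def linkNbhd (E : Finset (Finset α)) (T B : Finset α) : Finset α :=
  B.filter fun v => ∃ u ∈ T, ∃ e ∈ E, u ∈ e ∧ v ∈ e ∧ e \ {u} ⊆ B

lemma mem_linkNbhd {E : Finset (Finset α)} {T B : Finset α} {v : α} :
    v ∈ linkNbhd E T B ↔ v ∈ B ∧ ∃ u ∈ T, ∃ e ∈ E, u ∈ e ∧ v ∈ e ∧ e \ {u} ⊆ B :=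
  mem_filter

lemma linkNbhd_subset (E : Finset (Finset α)) (T B : Finset α) : linkNbhd E T B ⊆ B :=
  filter_subset _ _

def crossAdj (E : Finset (Finset α)) (U₁ U₂ : Finset α) (u v : α) : Prop :=
  ∃ e ∈ E, u ∈ e ∧ v ∈ e ∧ (e \ {u} ⊆ U₂ ∨ e \ {v} ⊆ U₁)

instance (E : Finset (Finset α)) (U₁ U₂ : Finset α) : DecidableRel (crossAdj E U₁ U₂) :=
  fun _ _ => by unfold crossAdj; infer_instance

lemma linkNbhd_subset_filter_crossAdj (E : Finset (Finset α)) (T U₁ U₂ : Finset α) :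
    linkNbhd E T U₂ ⊆ U₂.filter fun v => ∃ u ∈ T, crossAdj E U₁ U₂ u v := by
  intro v hv
  obtain ⟨hvU₂, u, huT, e, heE, hue, hve, he⟩ := mem_linkNbhd.1 hv
  exact mem_filter.2 ⟨hvU₂, u, huT, e, heE, hue, hve, Or.inl he⟩

lemma linkNbhd_subset_filter_crossAdj_swap (E : Finset (Finset α)) (S U₁ U₂ : Finset α) :
    linkNbhd E S U₁ ⊆ U₁.filter fun u => ∃ v ∈ S, crossAdj E U₁ U₂ u v := by
  intro u hu
  obtain ⟨huU₁, v, hvS, e, heE, hve, hue, he⟩ := mem_linkNbhd.1 hu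
  exact mem_filter.2 ⟨huU₁, v, hvS, e, heE, hue, hve, Or.inr he⟩

lemma exists_matching_of_injective {r m : ℕ} {E : Finset (Finset α)} {U₁ U₂ : Finset α}
    (huni : ∀ s ∈ E, s.card = r) (hdisj : Disjoint U₁ U₂) (hU₁ : U₁.card = m)
    {f : U₁ → α} (hf_inj : Function.Injective f)
    (hf : ∀ u, f u ∈ U₂ ∧ crossAdj E U₁ U₂ u (f u)) :
    ∃ (a b : Fin m → α) (e : Fin m → Finset α),
      Function.Injective a ∧ Function.Injective b ∧ Function.Injective e ∧
      ∀ i, a i ∈ U₁ ∧ b i ∈ U₂ ∧ e i ∈ E ∧ a i ∈ e i ∧ b i ∈ e i ∧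
        (((e i ∩ U₁).card = 1 ∧ (e i ∩ U₂).card = r - 1) ∨
         ((e i ∩ U₁).card = r - 1 ∧ (e i ∩ U₂).card = 1)) := by
  unfold crossAdj at hf
  choose hfU e heE hue hfe hshape using hf
  have hsplit : ∀ u : U₁, (e u ∩ U₁ = {u.1} ∧ e u ∩ U₂ = e u \ {u.1}) ∨
      (e u ∩ U₂ = {f u} ∧ e u ∩ U₁ = e u \ {f u}) := fun u =>
    (hshape u).imp
      (fun h => ⟨inter_eq_singleton_of_sdiff_subset hdisj (hue u) u.2 h,
        inter_eq_sdiff_of_sdiff_subset hdisj u.2 h⟩)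
      (fun h => ⟨inter_eq_singleton_of_sdiff_subset hdisj.symm (hfe u) (hfU u) h,
        inter_eq_sdiff_of_sdiff_subset hdisj.symm (hfU u) h⟩)
  have he_inj : Function.Injective e := by
    intro u w huw
    rcases hsplit u with ⟨h, -⟩ | ⟨h, -⟩
    · have : w.1 ∈ e u ∩ U₁ := mem_inter.2 ⟨huw ▸ hue w, w.2⟩
      rw [h, mem_singleton] at this
      exact (Subtype.ext this).symm
    · have : f w ∈ e u ∩ U₂ := mem_inter.2 ⟨huw ▸ hfe w, hfU w⟩
      rw [h, mem_singleton] at this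
      exact (hf_inj this).symm
  have hcard_sdiff : ∀ u : U₁, ∀ x ∈ e u, (e u \ {x}).card = r - 1 := fun u x hx => by
    rw [card_sdiff_of_subset (singleton_subset_iff.2 hx), card_singleton, huni _ (heE u)]
  set g := (U₁.equivFinOfCardEq hU₁).symm
  refine ⟨fun i => (g i).1, fun i => f (g i), fun i => e (g i),
    Subtype.val_injective.comp g.injective, hf_inj.comp g.injective, he_inj.comp g.injective,
    fun i => ⟨(g i).2, hfU _, heE _, hue _, hfe _, ?_⟩⟩
  rcases hsplit (g i) with ⟨h₁, h₂⟩ | ⟨h₂, h₁⟩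
  · exact Or.inl ⟨by rw [h₁, card_singleton], by rw [h₂, hcard_sdiff _ _ (hue _)]⟩
  · exact Or.inr ⟨by rw [h₁, hcard_sdiff _ _ (hfe _)], by rw [h₂, card_singleton]⟩

end Hypergraph

section Pseudorandom

variable {n : ℕ}

lemma eBetween_mono {E E' : Finset (Finset (Fin n))} (h : E ⊆ E') (T U : Finset (Fin n)) :
    eBetween n E T U ≤ eBetween n E' T U :=
  card_le_card (filter_subset_filter _ h)

lemma sum_degIn_le_eBetween_linkNbhd (E : Finset (Finset (Fin n))) {T B : Finset (Fin n)}
    (hTB : Disjoint T B) : ∑ u ∈ T, degIn n E u B ≤ eBetween n E T (linkNbhd E T B) := by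
  unfold degIn
  rw [← card_biUnion]
  · refine card_le_card fun e he => ?_
    obtain ⟨u, huT, he⟩ := mem_biUnion.1 he
    obtain ⟨heE, hue, heB⟩ := mem_filter.1 he
    have heT := inter_eq_singleton_of_sdiff_subset hTB hue huT heB
    refine mem_filter.2 ⟨heE, by rw [heT, card_singleton], fun v hv => ?_⟩
    obtain ⟨hve, hvT⟩ := mem_sdiff.1 hv
    have hvu : v ∈ e \ {u} := mem_sdiff.2 ⟨hve, fun h => hvT (mem_singleton.1 h ▸ huT)⟩
    exact mem_linkNbhd.2 ⟨heB hvu, u, huT, e, heE, hue, hve, heB⟩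
  · intro u₁ hu₁ u₂ hu₂ hne
    refine disjoint_left.2 fun e he₁ he₂ => ?_
    obtain ⟨-, -, he₁B⟩ := mem_filter.1 he₁
    obtain ⟨-, hu₂e, -⟩ := mem_filter.1 he₂
    exact disjoint_left.1 hTB hu₂ (he₁B (by simp [hu₂e, Ne.symm hne]))

lemma card_le_card_linkNbhd {r : ℕ} {ε p δ : ℝ} {EH Eh : Finset (Finset (Fin n))}
    {T B : Finset (Fin n)} {h : ℕ} (hPR : Pseudorandom r n ε p EH) (hsub : Eh ⊆ EH)
    (hTB : Disjoint T B) (hdeg : ∀ u ∈ T, δ ≤ degIn n Eh u B) (hε : 0 ≤ 1 + ε)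
    (hp : 0 ≤ p) (hδ : (1 + ε) * p * h.choose (r - 1) + Real.log n ^ ((1 : ℝ) + ε) < δ)
    (hTh : T.card ≤ h) :
    T.card ≤ (linkNbhd Eh T B).card := by
  by_contra! hlt
  set W := linkNbhd Eh T B
  have hTW : Disjoint T W := hTB.mono_right (linkNbhd_subset _ _ _)
  have hT : (0 : ℝ) < T.card := by exact_mod_cast (Nat.zero_le _).trans_lt hlt
  have hC : (W.card.choose (r - 1) : ℝ) ≤ h.choose (r - 1) := by
    exact_mod_cast Nat.choose_le_choose _ (hlt.le.trans hTh)
  have hmono := mul_le_mul_of_nonneg_left hC (by positivity : 0 ≤ (1 + ε) * p * T.card)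
  exact lt_irrefl _ (calc
    (T.card * δ : ℝ) ≤ ∑ u ∈ T, (degIn n Eh u B : ℝ) := by simpa using sum_le_sum hdeg
    _ ≤ eBetween n EH T W := by
      exact_mod_cast (sum_degIn_le_eBetween_linkNbhd Eh hTB).trans (eBetween_mono hsub T W)
    _ ≤ (1 + ε) * p * T.card * W.card.choose (r - 1) + T.card * Real.log n ^ ((1 : ℝ) + ε) :=
      hPR.1 T W hTW hlt.le
    _ ≤ T.card * ((1 + ε) * p * h.choose (r - 1) + Real.log n ^ ((1 : ℝ) + ε)) := by linarith
    _ < T.card * δ := mul_lt_mul_of_pos_left hδ hT)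

end Pseudorandom

theorem stmt14_general (r : ℕ) (γ c ε : ℝ) (hr : 3 ≤ r) (hγ0 : 0 < γ)
    (hε0 : 0 < ε) (hε1 : ε ≤ 2 ^ (r - 3) * γ) (hε2 : 1 + ε < c) :
    ∃ n₀ : ℕ, ∀ n ≥ n₀, ∀ (p : ℝ) (EH Eh : Finset (Finset (Fin n)))
      (U₁ U₂ : Finset (Fin n)) (m : ℕ),
      (∀ s ∈ EH, s.card = r) → Pseudorandom r n ε p EH → Eh ⊆ EH →
      Disjoint U₁ U₂ → U₁.card = m → U₂.card = m →
      (n : ℝ) / (Real.log n) ^ c ≤ (m : ℝ) →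
      (Real.log n) ^ (c * r) / (n : ℝ) ^ (r - 1) ≤ p →
      (∀ u ∈ U₁, (1 / 2 ^ (r - 1) + γ) * p * (m.choose (r - 1)) ≤
        (degIn n Eh u U₂ : ℝ)) →
      (∀ u ∈ U₂, (1 / 2 ^ (r - 1) + γ) * p * (m.choose (r - 1)) ≤
        (degIn n Eh u U₁ : ℝ)) →
      ∃ (a b : Fin m → Fin n) (e : Fin m → Finset (Fin n)),
        Function.Injective a ∧ Function.Injective b ∧ Function.Injective e ∧
        ∀ i, a i ∈ U₁ ∧ b i ∈ U₂ ∧ e i ∈ Eh ∧ a i ∈ e i ∧ b i ∈ e i ∧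
          (((e i ∩ U₁).card = 1 ∧ (e i ∩ U₂).card = r - 1) ∨
           ((e i ∩ U₁).card = r - 1 ∧ (e i ∩ U₂).card = 1)) := by
  obtain ⟨n₀, hn₀⟩ :=
    eventually_atTop.1 (eventually_pseudorandom_bound_lt_degree hr hγ0 (by linarith) hε1 hε2)
  refine ⟨n₀, ?_⟩
  intro n hn p EH Eh U₁ U₂ m huni hPR hsub hdisj hU₁ hU₂ hm hp hdeg₁ hdeg₂
  obtain ⟨hp0, hδ⟩ := hn₀ n hn m p hm hp
  have hsmall {A B : Finset (Fin n)} (hAB : Disjoint A B)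
      (hdeg : ∀ u ∈ A,
        (1 / 2 ^ (r - 1) + γ) * p * (m.choose (r - 1)) ≤ (degIn n Eh u B : ℝ))
      (T : Finset (Fin n)) (hT : T ⊆ A) (hTh : T.card ≤ (m + 1) / 2) :
      T.card ≤ (linkNbhd Eh T B).card :=
    card_le_card_linkNbhd hPR hsub (hAB.mono_left hT) (fun u hu => hdeg u (hT hu))
      (by linarith) hp0.le hδ hTh
  obtain ⟨f, hf_inj, hf⟩ := exists_injective_of_card_le_card_filter (crossAdj Eh U₁ U₂)
    fun T hT => card_le_card_filter_of_small_expansion (crossAdj Eh U₁ U₂) (h := (m + 1) / 2)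
      (hU₁.trans hU₂.symm) (by omega)
      (fun T hT hTh => (hsmall hdisj hdeg₁ T hT hTh).trans
        (card_le_card (linkNbhd_subset_filter_crossAdj Eh T U₁ U₂)))
      (fun S hS hSh => (hsmall hdisj.symm hdeg₂ S hS hSh).trans
        (card_le_card (linkNbhd_subset_filter_crossAdj_swap Eh S U₁ U₂)))
      hT
  exact exists_matching_of_injective (fun s hs => huni s (hsub hs)) hdisj hU₁ hf_inj hf

/-- The matching lemma: in a subgraph `H` of an `(ε,p)`-pseudorandom
`r`-uniform hypergraph, two disjoint `m`-sets `U₁, U₂` with mutual minimum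
degree at least `(2^(1-r) + γ) p C(m, r-1)` admit a `(U₁,U₂)`-matching. -/
theorem stmt14 (r : ℕ) (γ c ε : ℝ) (hr : 3 ≤ r) (hγ0 : 0 < γ) (hγ1 : γ < 1)
    (hc : 1 < c) (hε0 : 0 < ε) (hε1 : ε ≤ 2 ^ (r - 3) * γ) (hε2 : 1 + ε < c) :
    ∃ n₀ : ℕ, ∀ n ≥ n₀, ∀ (p : ℝ) (EH Eh : Finset (Finset (Fin n)))
      (U₁ U₂ : Finset (Fin n)) (m : ℕ),
      (∀ s ∈ EH, s.card = r) → Pseudorandom r n ε p EH → Eh ⊆ EH →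
      Disjoint U₁ U₂ → U₁.card = m → U₂.card = m →
      (n : ℝ) / (Real.log n) ^ c ≤ (m : ℝ) →
      (Real.log n) ^ (c * r) / (n : ℝ) ^ (r - 1) ≤ p →
      (∀ u ∈ U₁, (1 / 2 ^ (r - 1) + γ) * p * (m.choose (r - 1)) ≤
        (degIn n Eh u U₂ : ℝ)) →
      (∀ u ∈ U₂, (1 / 2 ^ (r - 1) + γ) * p * (m.choose (r - 1)) ≤
        (degIn n Eh u U₁ : ℝ)) →
      ∃ (a b : Fin m → Fin n) (e : Fin m → Finset (Fin n)),
        Function.Injective a ∧ Function.Injective b ∧ Function.Injective e ∧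
        ∀ i, a i ∈ U₁ ∧ b i ∈ U₂ ∧ e i ∈ Eh ∧ a i ∈ e i ∧ b i ∈ e i ∧
          (((e i ∩ U₁).card = 1 ∧ (e i ∩ U₂).card = r - 1) ∨
           ((e i ∩ U₁).card = r - 1 ∧ (e i ∩ U₂).card = 1)) :=
  stmt14_general r γ c ε hr hγ0 hε0 hε1 hε2
end

section
/- Let Γ be a finite set, each element i included in a random subset independently with probability pᵢ, let 𝒮 ⊆ 2^Γ, and X = Σ_{A ∈ 𝒮} 1[A ⊆ random subset]. Then for 0 ≤ t ≤ E[X], P[X ≤ E[X] − t] ≤ exp(−t² / (2·Δ̄)), where Δ̄ = E[X] + Σ_{A ∈ 𝒮} Σ_{B ∈ 𝒮, B ≠ A, A ∩ B ≠ ∅} E[X_A X_B]. -/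
open Finset

/-!
Let `L(s) = E[exp(-s X)]`. For `A ∈ S` split `X = Y_A + Z_A`, where `Y_A` counts the members of
`S` equal to `A` or meeting it and `Z_A` the others. Conditioning on `A ⊆ Γ_p` is the same as
raising `p` to `1` on `A`; under that product measure Harris' inequality decouples the decreasing
functions `exp(-s Y_A)` and `exp(-s Z_A)`, and `Z_A` does not see the coordinates in `A`. With
`exp(-s Y_A) ≥ 1 - s Y_A` this gives `E[X_A exp(-s X)] ≥ (E[X_A] - s Δ_A) L(s)`, and summing over
`A` yields `-L'(s) ≥ (E[X] - s Δ̄) L(s)`. Integrating, `L(s) ≤ exp(-s E[X] + s² Δ̄ / 2)`, and the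
exponential Markov inequality with `s = t / Δ̄` concludes.
-/

namespace Janson

lemma le_mul_exp_sub_of_hasDerivAt {f f' g g' : ℝ → ℝ} (hf : ∀ x, HasDerivAt f (f' x) x)
    (hg : ∀ x, HasDerivAt g (g' x) x) (h : ∀ x, 0 < x → f' x ≤ g' x * f x) {x : ℝ} (hx : 0 ≤ x) :
    f x ≤ f 0 * Real.exp (g x - g 0) := by
  set H := fun y => f y * Real.exp (-g y)
  have hH : ∀ y, HasDerivAt H ((f' y - g' y * f y) * Real.exp (-g y)) y := fun y =>
    ((hf y).mul (hg y).neg.exp).congr_deriv (by rw [Pi.neg_apply]; ring)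
  have hanti : AntitoneOn H (Set.Ici 0) := by
    refine antitoneOn_of_deriv_nonpos (convex_Ici 0)
      (fun y _ => (hH y).continuousAt.continuousWithinAt)
      (fun y _ => (hH y).differentiableAt.differentiableWithinAt) fun y hy => ?_
    rw [interior_Ici] at hy
    rw [(hH y).deriv]
    exact mul_nonpos_of_nonpos_of_nonneg (sub_nonpos.2 (h y hy)) (Real.exp_pos _).le
  calc f x = H x * Real.exp (g x) := by simp [H, mul_assoc, ← Real.exp_add]
    _ ≤ H 0 * Real.exp (g x) :=
      mul_le_mul_of_nonneg_right (hanti Set.self_mem_Ici hx hx) (Real.exp_pos _).le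
    _ = f 0 * Real.exp (g x - g 0) := by
      rw [mul_assoc, ← Real.exp_add, neg_add_eq_sub]

variable {Γ : Type*}

noncomputable def ind (A : Finset Γ) (ω : Γ → Bool) : ℝ :=
  if ∀ i ∈ A, ω i = true then 1 else 0

lemma ind_nonneg (A : Finset Γ) (ω : Γ → Bool) : 0 ≤ ind A ω := by
  unfold ind; split_ifs <;> norm_num

lemma ind_monotone (A : Finset Γ) : Monotone (ind A) := by
  intro ω ω' h
  unfold ind
  split_ifs with hω hω' <;> norm_num
  exact hω' fun i hi => h i (hω i hi)

lemma ind_congr {A : Finset Γ} {ω ω' : Γ → Bool} (h : ∀ i ∈ A, ω i = ω' i) :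
    ind A ω = ind A ω' := by
  unfold ind
  congr 1
  exact propext (forall₂_congr fun i hi => by rw [h i hi])

noncomputable def count (S : Finset (Finset Γ)) (ω : Γ → Bool) : ℝ :=
  ∑ A ∈ S, ind A ω

section

variable [DecidableEq Γ]

lemma ind_mul_ind (A B : Finset Γ) (ω : Γ → Bool) : ind A ω * ind B ω = ind (A ∪ B) ω := by
  unfold ind
  simp only [mem_union, or_imp, forall_and]
  split_ifs <;> simp_all

/-- `B = A` is listed separately for the sake of `A = ∅`, which meets nothing. -/
def neighbors (S : Finset (Finset Γ)) (A : Finset Γ) : Finset (Finset Γ) :=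
  S.filter fun B => B = A ∨ (A ∩ B).Nonempty

def delta (p : Γ → ℝ) (S : Finset (Finset Γ)) : ℝ :=
  ∑ A ∈ S, ∑ B ∈ neighbors S A, ∏ i ∈ A ∪ B, p i

lemma delta_nonneg {p : Γ → ℝ} (hp0 : ∀ i, 0 ≤ p i) (S : Finset (Finset Γ)) : 0 ≤ delta p S :=
  sum_nonneg fun _ _ => sum_nonneg fun _ _ => prod_nonneg fun i _ => hp0 i

lemma delta_eq (p : Γ → ℝ) (S : Finset (Finset Γ)) :
    delta p S = (∑ A ∈ S, ∏ i ∈ A, p i) +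
      ∑ A ∈ S, ∑ B ∈ S, if B ≠ A ∧ (A ∩ B).Nonempty then ∏ i ∈ A ∪ B, p i else 0 := by
  rw [delta, ← sum_add_distrib]
  refine sum_congr rfl fun A hA => ?_
  have hsplit : ∀ B : Finset Γ,
      (if B = A ∨ (A ∩ B).Nonempty then ∏ i ∈ A ∪ B, p i else 0)
        = (if A = B then ∏ i ∈ A ∪ B, p i else 0)
          + (if B ≠ A ∧ (A ∩ B).Nonempty then ∏ i ∈ A ∪ B, p i else 0) := fun B => by
    by_cases hAB : B = A
    · simp [hAB]
    · simp [hAB, Ne.symm hAB]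
  rw [neighbors, sum_filter, sum_congr rfl fun B _ => hsplit B, sum_add_distrib, sum_ite_eq,
    if_pos hA, union_self]

/-- The law of `Γ_p` conditioned on `A ⊆ Γ_p`. -/
def condition (p : Γ → ℝ) (A : Finset Γ) (i : Γ) : ℝ :=
  if i ∈ A then 1 else p i

lemma condition_nonneg {p : Γ → ℝ} (hp0 : ∀ i, 0 ≤ p i) (A : Finset Γ) (i : Γ) :
    0 ≤ condition p A i := by
  unfold condition; split_ifs <;> simp [hp0 i]

lemma condition_le_one {p : Γ → ℝ} (hp1 : ∀ i, p i ≤ 1) (A : Finset Γ) (i : Γ) :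
    condition p A i ≤ 1 := by
  unfold condition; split_ifs <;> simp [hp1 i]

end

variable [Fintype Γ]

noncomputable def prob (p : Γ → ℝ) (ω : Γ → Bool) : ℝ :=
  ∏ i, if ω i then p i else 1 - p i

lemma prob_nonneg {p : Γ → ℝ} (hp0 : ∀ i, 0 ≤ p i) (hp1 : ∀ i, p i ≤ 1) (ω : Γ → Bool) :
    0 ≤ prob p ω :=
  prod_nonneg fun i _ => by split_ifs <;> linarith [hp0 i, hp1 i]

lemma prob_inf_mul_prob_sup (p : Γ → ℝ) (ω ω' : Γ → Bool) :
    prob p (ω ⊓ ω') * prob p (ω ⊔ ω') = prob p ω * prob p ω' := by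
  simp only [prob, ← prod_mul_distrib]
  refine prod_congr rfl fun i _ => ?_
  change (if (ω i && ω' i) then _ else _) * (if (ω i || ω' i) then _ else _) = _
  cases ω i <;> cases ω' i <;> simp [mul_comm]

variable [DecidableEq Γ]

noncomputable def expect (p : Γ → ℝ) (F : (Γ → Bool) → ℝ) : ℝ :=
  ∑ ω, prob p ω * F ω

section ProductMeasure

variable {p : Γ → ℝ}

lemma sum_prob (p : Γ → ℝ) : ∑ ω, prob p ω = 1 := by
  simpa [prob] using (Fintype.prod_sum fun i (b : Bool) => if b then p i else 1 - p i).symm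

lemma expect_const (p : Γ → ℝ) (c : ℝ) : expect p (fun _ => c) = c := by
  rw [expect, ← sum_mul, sum_prob, one_mul]

lemma expect_sub (p : Γ → ℝ) (F G : (Γ → Bool) → ℝ) :
    expect p (fun ω => F ω - G ω) = expect p F - expect p G := by
  simp only [expect, mul_sub, sum_sub_distrib]

lemma expect_const_mul (p : Γ → ℝ) (c : ℝ) (F : (Γ → Bool) → ℝ) :
    expect p (fun ω => c * F ω) = c * expect p F := by
  simp only [expect, mul_sum, mul_left_comm]

lemma expect_sum {ι : Type*} (p : Γ → ℝ) (s : Finset ι) (F : ι → (Γ → Bool) → ℝ) :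
    expect p (fun ω => ∑ j ∈ s, F j ω) = ∑ j ∈ s, expect p (F j) := by
  simp only [expect, mul_sum]
  exact sum_comm

lemma expect_mono (hp0 : ∀ i, 0 ≤ p i) (hp1 : ∀ i, p i ≤ 1) {F G : (Γ → Bool) → ℝ}
    (h : ∀ ω, F ω ≤ G ω) : expect p F ≤ expect p G :=
  sum_le_sum fun ω _ => mul_le_mul_of_nonneg_left (h ω) (prob_nonneg hp0 hp1 ω)

lemma expect_nonneg (hp0 : ∀ i, 0 ≤ p i) (hp1 : ∀ i, p i ≤ 1) {F : (Γ → Bool) → ℝ}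
    (h : ∀ ω, 0 ≤ F ω) : 0 ≤ expect p F :=
  sum_nonneg fun ω _ => mul_nonneg (prob_nonneg hp0 hp1 ω) (h ω)

/-- Harris' inequality for decreasing functions, via FKG on the dual lattice. -/
lemma expect_mul_expect_le (hp0 : ∀ i, 0 ≤ p i) (hp1 : ∀ i, p i ≤ 1)
    {f g : (Γ → Bool) → ℝ} (hf₀ : 0 ≤ f) (hg₀ : 0 ≤ g) (hf : Antitone f) (hg : Antitone g) :
    expect p f * expect p g ≤ expect p (fun ω => f ω * g ω) := by
  have h := fkg (α := (Γ → Bool)ᵒᵈ) (μ := prob p) (f := f) (g := g)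
    (fun ω => prob_nonneg hp0 hp1 ω) hf₀ hg₀ hf.dual_left hg.dual_left
    (fun ω ω' => (prob_inf_mul_prob_sup p ω ω').ge.trans_eq (mul_comm _ _))
  have hsum : ∑ ω : (Γ → Bool)ᵒᵈ, prob p ω = 1 := sum_prob p
  rwa [hsum, one_mul] at h

lemma expect_eq_of_forall_notMem {q : Γ → ℝ} {A : Finset Γ} (hpq : ∀ i ∉ A, p i = q i)
    {F : (Γ → Bool) → ℝ} (hF : ∀ ω ω', (∀ i ∉ A, ω i = ω' i) → F ω = F ω') :
    expect p F = expect q F := by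
  let e := (Equiv.piEquivPiSubtypeProd (· ∈ A) fun _ => Bool).symm
  have he : ∀ x i, e x i = if h : i ∈ A then x.1 ⟨i, h⟩ else x.2 ⟨i, h⟩ := fun _ _ =>
    Equiv.piEquivPiSubtypeProd_symm_apply _ _ _ _
  let G : ({i // i ∉ A} → Bool) → ℝ := fun v => F (e (fun _ => true, v))
  -- splitting `ω` along `A`, the law factorises and its `A`-factor has total mass one
  suffices key : ∀ r : Γ → ℝ, (∀ i ∉ A, r i = p i) → expect r F =
      ∑ v, (∏ i : {i // i ∉ A}, if v i then p i else 1 - p i) * G v from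
    (key p fun _ _ => rfl).trans (key q fun i hi => (hpq i hi).symm).symm
  intro r hr
  have hprob : ∀ u v, prob r (e (u, v)) = (∏ i : {i // i ∈ A}, if u i then r i else 1 - r i) *
      ∏ i : {i // i ∉ A}, if v i then p i else 1 - p i := by
    intro u v
    rw [prob, ← Fintype.prod_subtype_mul_prod_subtype (· ∈ A) (M := ℝ)]
    -- the two sides use different `Fintype` instances on the subtypes
    congr 1 <;> refine prod_congr (congr_arg _ (Subsingleton.elim _ _)) fun i _ => ?_
    · simp [he, i.2]
    · simp [he, i.2, hr i i.2]
  have hG : ∀ u v, F (e (u, v)) = G v := fun u v =>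
    hF _ _ fun i hi => by simp [he, hi]
  have hmass : ∑ u : {i // i ∈ A} → Bool, ∏ i, (if u i then r i else 1 - r i) = 1 := by
    simpa using
      (Fintype.prod_sum fun (i : {i // i ∈ A}) (b : Bool) => if b then r i else 1 - r i).symm
  rw [expect, ← e.sum_comp, Fintype.sum_prod_type]
  simp only [hprob, hG, mul_assoc, ← mul_sum, ← sum_mul, hmass, one_mul]

end ProductMeasure

section Conditioning

variable {p : Γ → ℝ}

lemma prob_mul_ind (p : Γ → ℝ) (A : Finset Γ) (ω : Γ → Bool) :
    prob p ω * ind A ω = (∏ i ∈ A, p i) * prob (condition p A) ω := by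
  unfold ind prob condition
  split_ifs with hA
  · rw [mul_one, ← Fintype.prod_ite_mem A p, ← prod_mul_distrib]
    refine prod_congr rfl fun i _ => ?_
    by_cases hi : i ∈ A <;> simp [hi, hA]
  · obtain ⟨i, hi, hωi⟩ := not_forall₂.1 hA
    rw [mul_zero, prod_eq_zero (mem_univ i) (by simp [hi, hωi]), mul_zero]

lemma expect_ind_mul (p : Γ → ℝ) (A : Finset Γ) (F : (Γ → Bool) → ℝ) :
    expect p (fun ω => ind A ω * F ω) = (∏ i ∈ A, p i) * expect (condition p A) F := by
  simp only [expect, ← mul_assoc, prob_mul_ind, mul_sum]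

lemma expect_ind (p : Γ → ℝ) (A : Finset Γ) : expect p (ind A) = ∏ i ∈ A, p i := by
  simpa [expect_const] using expect_ind_mul p A fun _ => 1

lemma expect_ind_mul_exp_ge (hp0 : ∀ i, 0 ≤ p i) (hp1 : ∀ i, p i ≤ 1) {A : Finset Γ}
    {Y Z : (Γ → Bool) → ℝ} (hY0 : ∀ ω, 0 ≤ Y ω) (hY : Monotone Y) (hZ : Monotone Z)
    (hZA : ∀ ω ω', (∀ i ∉ A, ω i = ω' i) → Z ω = Z ω') {s : ℝ} (hs : 0 ≤ s) :
    ((∏ i ∈ A, p i) - s * expect p (fun ω => ind A ω * Y ω)) *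
        expect p (fun ω => Real.exp (-(s * (Y ω + Z ω))))
      ≤ expect p (fun ω => ind A ω * Real.exp (-(s * (Y ω + Z ω)))) := by
  set q := condition p A
  have hq0 := condition_nonneg hp0 A
  have hq1 := condition_le_one hp1 A
  have hpA : 0 ≤ ∏ i ∈ A, p i := prod_nonneg fun i _ => hp0 i
  have hexp_anti : ∀ {W : (Γ → Bool) → ℝ}, Monotone W → Antitone fun ω => Real.exp (-(s * W ω)) :=
    fun hW _ _ h => Real.exp_le_exp.2 (neg_le_neg (mul_le_mul_of_nonneg_left (hW h) hs))
  have hYfactor : (∏ i ∈ A, p i) - s * expect p (fun ω => ind A ω * Y ω)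
      ≤ (∏ i ∈ A, p i) * expect q (fun ω => Real.exp (-(s * Y ω))) := by
    calc (∏ i ∈ A, p i) - s * expect p (fun ω => ind A ω * Y ω)
        = (∏ i ∈ A, p i) * expect q (fun ω => 1 - s * Y ω) := by
          rw [expect_ind_mul, expect_sub, expect_const, expect_const_mul]
          ring
      _ ≤ _ := mul_le_mul_of_nonneg_left (expect_mono hq0 hq1 fun ω => by
          linarith [Real.add_one_le_exp (-(s * Y ω))]) hpA
  have hZfactor : expect p (fun ω => Real.exp (-(s * (Y ω + Z ω))))
      ≤ expect q (fun ω => Real.exp (-(s * Z ω))) := by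
    calc expect p (fun ω => Real.exp (-(s * (Y ω + Z ω))))
        ≤ expect p (fun ω => Real.exp (-(s * Z ω))) := expect_mono hp0 hp1 fun ω =>
          Real.exp_le_exp.2 (by nlinarith [hY0 ω])
      _ = _ := expect_eq_of_forall_notMem (A := A) (fun i hi => by simp [q, condition, hi])
          fun ω ω' h => by rw [hZA ω ω' h]
  have hHarris := expect_mul_expect_le hq0 hq1 (fun ω => (Real.exp_pos _).le)
    (fun ω => (Real.exp_pos _).le) (hexp_anti hY) (hexp_anti hZ)
  simp only [← Real.exp_add, ← neg_add, ← mul_add] at hHarris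
  calc _ ≤ (∏ i ∈ A, p i) * expect q (fun ω => Real.exp (-(s * Y ω))) *
        expect p (fun ω => Real.exp (-(s * (Y ω + Z ω)))) :=
        mul_le_mul_of_nonneg_right hYfactor
          (expect_nonneg hp0 hp1 fun ω => (Real.exp_pos _).le)
    _ ≤ (∏ i ∈ A, p i) * (expect q (fun ω => Real.exp (-(s * Y ω))) *
        expect q (fun ω => Real.exp (-(s * Z ω)))) := by
        rw [← mul_assoc]
        exact mul_le_mul_of_nonneg_left hZfactor
          (mul_nonneg hpA (expect_nonneg hq0 hq1 fun ω => (Real.exp_pos _).le))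
    _ ≤ (∏ i ∈ A, p i) * expect q (fun ω => Real.exp (-(s * (Y ω + Z ω)))) :=
        mul_le_mul_of_nonneg_left hHarris hpA
    _ = _ := (expect_ind_mul p A _).symm

end Conditioning

lemma hasDerivAt_expect_exp (p : Γ → ℝ) (X : (Γ → Bool) → ℝ) (s : ℝ) :
    HasDerivAt (fun s => expect p fun ω => Real.exp (-(s * X ω)))
      (-expect p fun ω => X ω * Real.exp (-(s * X ω))) s := by
  refine (HasDerivAt.fun_sum fun ω _ =>
    (((hasDerivAt_id s).mul_const (X ω)).neg.exp).const_mul (prob p ω)).congr_deriv ?_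
  simp only [expect, ← sum_neg_distrib]
  exact sum_congr rfl fun ω _ => by simp only [id_eq, one_mul, Pi.neg_apply]; ring

lemma sum_prob_le_le_exp_mul_expect {p : Γ → ℝ} (hp0 : ∀ i, 0 ≤ p i) (hp1 : ∀ i, p i ≤ 1)
    (X : (Γ → Bool) → ℝ) (a : ℝ) {s : ℝ} (hs : 0 ≤ s) :
    (∑ ω, if X ω ≤ a then prob p ω else 0)
      ≤ Real.exp (s * a) * expect p (fun ω => Real.exp (-(s * X ω))) := by
  rw [expect, mul_sum]
  refine sum_le_sum fun ω _ => ?_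
  have hω := prob_nonneg hp0 hp1 ω
  split_ifs with hX
  · calc prob p ω ≤ prob p ω * Real.exp (s * a + -(s * X ω)) :=
          le_mul_of_one_le_right hω (Real.one_le_exp (by nlinarith))
      _ = _ := by rw [Real.exp_add]; ring
  · positivity

section Count

variable {p : Γ → ℝ}

lemma natCast_card_filter_eq_count (S : Finset (Finset Γ)) (ω : Γ → Bool) :
    ((S.filter fun A => ∀ i ∈ A, ω i = true).card : ℝ) = count S ω := by
  rw [natCast_card_filter]
  -- here `∀ i ∈ A, _` is decided by `Fintype.decidableForallFintype`, in `ind` by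
  -- `decidableDforallFinset`
  exact sum_congr rfl fun A _ => by unfold ind; congr

lemma expect_ind_mul_exp_neg_count_ge (hp0 : ∀ i, 0 ≤ p i) (hp1 : ∀ i, p i ≤ 1)
    (S : Finset (Finset Γ)) (A : Finset Γ) {s : ℝ} (hs : 0 ≤ s) :
    ((∏ i ∈ A, p i) - s * ∑ B ∈ neighbors S A, ∏ i ∈ A ∪ B, p i) *
        expect p (fun ω => Real.exp (-(s * count S ω)))
      ≤ expect p (fun ω => ind A ω * Real.exp (-(s * count S ω))) := by
  have hmono : ∀ T : Finset (Finset Γ), Monotone fun ω => ∑ B ∈ T, ind B ω :=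
    fun T _ _ h => sum_le_sum fun B _ => ind_monotone B h
  have hcount : ∀ ω, count S ω =
      ∑ B ∈ neighbors S A, ind B ω + ∑ B ∈ S \ neighbors S A, ind B ω := fun ω => by
    rw [add_comm]
    exact (sum_sdiff (filter_subset _ S)).symm
  have hY : expect p (fun ω => ind A ω * ∑ B ∈ neighbors S A, ind B ω)
      = ∑ B ∈ neighbors S A, ∏ i ∈ A ∪ B, p i := by
    simp only [mul_sum, ind_mul_ind, expect_sum, expect_ind]
  have hZ : ∀ ω ω' : Γ → Bool, (∀ i ∉ A, ω i = ω' i) →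
      ∑ B ∈ S \ neighbors S A, ind B ω = ∑ B ∈ S \ neighbors S A, ind B ω' := by
    refine fun ω ω' h => sum_congr rfl fun B hB => ind_congr fun i hi => h i fun hiA => ?_
    obtain ⟨hBS, hBA⟩ := mem_sdiff.1 hB
    exact hBA (mem_filter.2 ⟨hBS, Or.inr ⟨i, mem_inter.2 ⟨hiA, hi⟩⟩⟩)
  simpa only [hcount, hY] using expect_ind_mul_exp_ge hp0 hp1
    (fun ω => sum_nonneg fun B _ => ind_nonneg B ω) (hmono (neighbors S A)) (hmono _) hZ hs

lemma expect_count_mul_exp_ge (hp0 : ∀ i, 0 ≤ p i) (hp1 : ∀ i, p i ≤ 1)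
    (S : Finset (Finset Γ)) {s : ℝ} (hs : 0 ≤ s) :
    ((∑ A ∈ S, ∏ i ∈ A, p i) - s * delta p S) *
        expect p (fun ω => Real.exp (-(s * count S ω)))
      ≤ expect p (fun ω => count S ω * Real.exp (-(s * count S ω))) :=
  calc _ = ∑ A ∈ S, ((∏ i ∈ A, p i) - s * ∑ B ∈ neighbors S A, ∏ i ∈ A ∪ B, p i) *
        expect p (fun ω => Real.exp (-(s * count S ω))) := by
        rw [delta, ← sum_mul, sum_sub_distrib, mul_sum]
    _ ≤ ∑ A ∈ S, expect p (fun ω => ind A ω * Real.exp (-(s * count S ω))) :=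
        sum_le_sum fun A _ => expect_ind_mul_exp_neg_count_ge hp0 hp1 S A hs
    _ = _ := by simp only [count, sum_mul, expect_sum]

lemma expect_exp_neg_count_le (hp0 : ∀ i, 0 ≤ p i) (hp1 : ∀ i, p i ≤ 1)
    (S : Finset (Finset Γ)) {s : ℝ} (hs : 0 ≤ s) :
    expect p (fun ω => Real.exp (-(s * count S ω)))
      ≤ Real.exp (-(s * ∑ A ∈ S, ∏ i ∈ A, p i) + s ^ 2 * delta p S / 2) := by
  set μ := ∑ A ∈ S, ∏ i ∈ A, p i
  have hg : ∀ u : ℝ, HasDerivAt (fun u => -(u * μ) + u ^ 2 * delta p S / 2)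
      (-(μ - u * delta p S)) u := fun u =>
    (((hasDerivAt_id u).mul_const μ).neg.add
      (((hasDerivAt_pow 2 u).mul_const (delta p S)).div_const 2)).congr_deriv (by simp; ring)
  have h := le_mul_exp_sub_of_hasDerivAt (hasDerivAt_expect_exp p (count S)) hg
    (fun u hu => by linarith [expect_count_mul_exp_ge hp0 hp1 S hu.le]) hs
  simpa [expect_const] using h

end Count

end Janson

open Janson in
theorem stmt17_general {Γ : Type*} [Fintype Γ] [DecidableEq Γ] (p : Γ → ℝ)
    (hp0 : ∀ i, 0 ≤ p i) (hp1 : ∀ i, p i ≤ 1)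
    (S : Finset (Finset Γ)) (t : ℝ) (ht0 : 0 ≤ t) :
    (∑ ω : Γ → Bool,
        if ((S.filter (fun A => ∀ i ∈ A, ω i = true)).card : ℝ) ≤
            (∑ A ∈ S, ∏ i ∈ A, p i) - t then
          ∏ i, (if ω i then p i else 1 - p i)
        else 0)
      ≤ Real.exp (-(t ^ 2) /
          (2 * ((∑ A ∈ S, ∏ i ∈ A, p i) +
            ∑ A ∈ S, ∑ B ∈ S,
              if B ≠ A ∧ (A ∩ B).Nonempty then ∏ i ∈ A ∪ B, p i else 0))) := by
  set μ := ∑ A ∈ S, ∏ i ∈ A, p i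
  rw [← delta_eq]
  set Δ := delta p S
  set s := t / Δ
  have hs : 0 ≤ s := div_nonneg ht0 (delta_nonneg hp0 S)
  calc _ = ∑ ω, if count S ω ≤ μ - t then prob p ω else 0 := by
        simp only [natCast_card_filter_eq_count]
        rfl
    _ ≤ Real.exp (s * (μ - t)) * expect p (fun ω => Real.exp (-(s * count S ω))) :=
        sum_prob_le_le_exp_mul_expect hp0 hp1 _ _ hs
    _ ≤ Real.exp (s * (μ - t)) * Real.exp (-(s * μ) + s ^ 2 * Δ / 2) :=
        mul_le_mul_of_nonneg_left (expect_exp_neg_count_le hp0 hp1 S hs) (Real.exp_pos _).le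
    _ = Real.exp (-(t ^ 2) / (2 * Δ)) := by
        rw [← Real.exp_add]
        congr 1
        rcases eq_or_ne Δ 0 with hΔ | hΔ
        · simp [s, hΔ]
        · simp only [s]
          field_simp
          ring

/-- Janson's inequality. `Γ` is a finite ground set, element `i` is included in
the random subset independently with probability `p i`, `S` is a family of
subsets of `Γ`, and `X = Σ_{A ∈ S} 1[A ⊆ random subset]`. For
`0 ≤ t ≤ E[X]`, `P[X ≤ E[X] - t] ≤ exp(-t² / (2 Δ̄))` where
`Δ̄ = E[X] + Σ_{A ∈ S} Σ_{B ∈ S, B ≠ A, A ∩ B ≠ ∅} E[X_A X_B]`. -/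
theorem stmt17 {Γ : Type*} [Fintype Γ] [DecidableEq Γ] (p : Γ → ℝ)
    (hp0 : ∀ i, 0 ≤ p i) (hp1 : ∀ i, p i ≤ 1)
    (S : Finset (Finset Γ)) (t : ℝ) (ht0 : 0 ≤ t)
    (ht : t ≤ ∑ A ∈ S, ∏ i ∈ A, p i) :
    (∑ ω : Γ → Bool,
        if ((S.filter (fun A => ∀ i ∈ A, ω i = true)).card : ℝ) ≤
            (∑ A ∈ S, ∏ i ∈ A, p i) - t then
          ∏ i, (if ω i then p i else 1 - p i)
        else 0)
      ≤ Real.exp (-(t ^ 2) /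
          (2 * ((∑ A ∈ S, ∏ i ∈ A, p i) +
            ∑ A ∈ S, ∑ B ∈ S,
              if B ≠ A ∧ (A ∩ B).Nonempty then ∏ i ∈ A ∪ B, p i else 0))) :=
  stmt17_general p hp0 hp1 S t ht0
end

section
/- Fix r ≥ 3, γ ∈ (0, 2^{1−r}) and c > 2. There exists ε > 0 such that: for any (ε,p)-pseudorandom r-uniform hypergraph 𝓗 on n vertices (n large) with p ≥ ln^{cr} n / n^{r−1} and Δ₂(𝓗) ≤ 2 ln n, any H ⊆ 𝓗, and any disjoint A, B ⊆ V(H) with |A| = m ≥ n/ln^c n, |B| ≥ 4m, and deg_H(a, B) ≥ (2^{1−r} + 2.5γ)·p·C(|B|, r−1) via (1, r−1)-edges for every a ∈ A, there exists a 2-matching for (A, B). -/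
/-!
Giving each `a ∈ A` exactly `deg a - 2` private dummy vertices turns the search for a 2-matching
into a Hall matching problem for the pairs `(a, g)`, `g` a `(1, r-1)`-edge at `a`, so `B` need not
be split. Hall's condition reduces to: whenever each `a ∈ W ⊆ A` keeps all but one of its edges,
these edges cover at least `2|W|` vertices `X ⊆ B`. Such an `X` receives at least `|W| (D - 1)`
edges from `W`, `D = (2^(1-r) + 2.5γ) p C(|B|, r-1)`, while for `|X| < 2|W|` pseudorandomness
gives fewer: by the first condition after padding `W` to `2|W|` vertices of `A` when
`2|W| ≤ |A|`, and by the second after padding `X` to `2|W| - 1` vertices of `B` otherwise. For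
large `n` the comparison holds because `p C(|B|, r-1) ≥ 3^(r-1) / (r-1)! · log^c n` and
`c > 2 > 1 + ε`.
-/

open Finset

open Real
open scoped Nat

theorem Nat.pow_mul_descFactorial_le (s n k : ℕ) :
    s ^ k * n.descFactorial k ≤ (s * n).descFactorial k := by
  induction k with
  | zero => simp
  | succ k ih =>
    rw [Nat.descFactorial_succ, Nat.descFactorial_succ, pow_succ]
    have : s * (n - k) ≤ s * n - k := by
      rcases Nat.eq_zero_or_pos s with rfl | hs
      · simp
      · rw [Nat.mul_sub]; exact Nat.sub_le_sub_left (Nat.le_mul_of_pos_left k hs) _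
    calc s ^ k * s * ((n - k) * n.descFactorial k)
        = s * (n - k) * (s ^ k * n.descFactorial k) := by ring
      _ ≤ (s * n - k) * (s * n).descFactorial k := Nat.mul_le_mul this ih

theorem Nat.pow_mul_choose_le (s n k : ℕ) : s ^ k * n.choose k ≤ (s * n).choose k := by
  have := pow_mul_descFactorial_le s n k
  rw [descFactorial_eq_factorial_mul_choose, descFactorial_eq_factorial_mul_choose,
    mul_left_comm] at this
  exact Nat.le_of_mul_le_mul_left this k.factorial_pos

section TwoHall

variable {α β ι : Type*}

def TwoHallCondition [DecidableEq β] (A : Finset α) (E : α → Finset ι) (V : ι → Finset β) :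
    Prop :=
  ∀ W ⊆ A, ∀ T : α → Finset ι, (∀ a ∈ W, T a ⊆ E a ∧ #(E a) ≤ #(T a) + 1) →
    2 * #W ≤ #(W.biUnion fun a => (T a).biUnion V)

/-- The node `⟨a, g⟩` of the Hall graph may use a vertex of `V g` or one of the `#(E a) - 2`
private dummies `⟨a, j⟩` of `a`, so a saturating matching sends at least two nodes above each `a`
into `β`. -/
def twoDemandNbhd (E : α → Finset ι) (V : ι → Finset β) (p : Σ _ : α, ι) :
    Finset (β ⊕ Σ _ : α, ℕ) :=
  (V p.2).disjSum ((range (#(E p.1) - 2)).map (Function.Embedding.sigmaMk p.1))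

namespace TwoHallCondition

variable [DecidableEq β] {A : Finset α} {E : α → Finset ι} {V : ι → Finset β}

theorem two_le_card (h : TwoHallCondition A E V) {a : α} (ha : a ∈ A) : 2 ≤ #(E a) := by
  by_contra! hlt
  simpa using h {a} (by simpa using ha) (fun _ => ∅) (by simpa using hlt)

theorem card_le_card_biUnion_twoDemandNbhd [DecidableEq α] [DecidableEq ι]
    (h : TwoHallCondition A E V) (S : Finset (A.sigma E)) :
    #S ≤ #(S.biUnion fun p => twoDemandNbhd E V p.1) := by
  set P := S.map (Function.Embedding.subtype _)
  set W := P.image Sigma.fst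
  set T : α → Finset ι := fun a => (P.filter (·.1 = a)).image Sigma.snd
  set W₀ := W.filter fun a => #(E a) ≤ #(T a) + 1
  have hPA : ∀ q ∈ P, q ∈ A.sigma E := by
    simp only [P, mem_map, Function.Embedding.coe_subtype]
    rintro _ ⟨q, -, rfl⟩
    exact q.2
  have hWA : W ⊆ A := by
    simp only [W, subset_iff, mem_image]
    rintro _ ⟨q, hq, rfl⟩
    exact (mem_sigma.1 (hPA q hq)).1
  have hTE : ∀ a, T a ⊆ E a := by
    intro a
    simp only [T, subset_iff, mem_image, mem_filter]
    rintro _ ⟨q, ⟨hq, rfl⟩, rfl⟩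
    exact (mem_sigma.1 (hPA q hq)).2
  have hST : #S ≤ ∑ a ∈ W, #(T a) := by
    rw [← card_map (Function.Embedding.subtype _), ← card_sigma]
    refine card_le_card fun q hq => mem_sigma.2 ⟨mem_image_of_mem _ hq, ?_⟩
    exact mem_image.2 ⟨q, mem_filter.2 ⟨hq, rfl⟩, rfl⟩
  have hTW : ∑ a ∈ W, #(T a) ≤ ∑ a ∈ W, (#(E a) - 2) + 2 * #W₀ := by
    have hle : ∀ a ∈ W, #(T a) ≤ (#(E a) - 2) + 2 * if #(E a) ≤ #(T a) + 1 then 1 else 0 :=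
      fun a _ => by have := card_le_card (hTE a); split_ifs <;> omega
    refine (sum_le_sum hle).trans_eq ?_
    rw [sum_add_distrib, ← mul_sum, sum_boole]
    rfl
  have hW₀ : 2 * #W₀ ≤ #(W₀.biUnion fun a => (T a).biUnion V) :=
    h W₀ ((filter_subset _ _).trans hWA) T fun a ha => ⟨hTE a, (mem_filter.1 ha).2⟩
  have hsub : (W₀.biUnion fun a => (T a).biUnion V).disjSum (W.sigma fun a => range (#(E a) - 2))
      ⊆ S.biUnion fun p => twoDemandNbhd E V p.1 := by
    intro z hz
    simp only [mem_biUnion, twoDemandNbhd]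
    rcases z with b | ⟨a, j⟩
    · simp only [inl_mem_disjSum, mem_biUnion, mem_filter, T, mem_image] at hz
      obtain ⟨a, -, g, ⟨q, ⟨hq, rfl⟩, rfl⟩, hb⟩ := hz
      obtain ⟨q, hqS, rfl⟩ := mem_map.1 hq
      exact ⟨q, hqS, inl_mem_disjSum.2 hb⟩
    · simp only [inr_mem_disjSum, mem_sigma, W, mem_image] at hz
      obtain ⟨⟨q, hq, rfl⟩, hj⟩ := hz
      obtain ⟨q, hqS, rfl⟩ := mem_map.1 hq
      exact ⟨q, hqS, inr_mem_disjSum.2 (mem_map_of_mem _ hj)⟩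
  calc #S ≤ ∑ a ∈ W, (#(E a) - 2) + 2 * #W₀ := hST.trans hTW
    _ ≤ #(W.sigma fun a => range (#(E a) - 2)) + #(W₀.biUnion fun a => (T a).biUnion V) := by
      rw [card_sigma]; simp only [card_range]; omega
    _ ≤ _ := by rw [add_comm, ← card_disjSum]; exact card_le_card hsub

theorem exists_injOn_twoDemandNbhd [DecidableEq α] [DecidableEq ι]
    (h : TwoHallCondition A E V) :
    ∃ F : (Σ _ : α, ι) → β ⊕ Σ _ : α, ℕ,
      Set.InjOn F (A.sigma E) ∧ ∀ q ∈ A.sigma E, F q ∈ twoDemandNbhd E V q := by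
  obtain ⟨F, hFinj, hF⟩ := (all_card_le_biUnion_card_iff_exists_injective _).1
    h.card_le_card_biUnion_twoDemandNbhd
  refine ⟨fun q => if hq : q ∈ A.sigma E then F ⟨q, hq⟩ else .inr ⟨q.1, 0⟩, ?_, fun q hq => ?_⟩
  · intro q hq q' hq' hqq'
    simp only [mem_coe] at hq hq'
    simp only [dif_pos hq, dif_pos hq'] at hqq'
    exact congrArg Subtype.val (hFinj hqq')
  · simpa only [dif_pos hq] using hF ⟨q, hq⟩

end TwoHallCondition

theorem exists_ne_isLeft_of_injOn_twoDemandNbhd {A : Finset α} {E : α → Finset ι}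
    {V : ι → Finset β} {F : (Σ _ : α, ι) → β ⊕ Σ _ : α, ℕ} (hFinj : Set.InjOn F (A.sigma E))
    (hF : ∀ q ∈ A.sigma E, F q ∈ twoDemandNbhd E V q) {a : α} (ha : a ∈ A) (hE : 2 ≤ #(E a)) :
    ∃ g₁ ∈ E a, ∃ g₂ ∈ E a, g₁ ≠ g₂ ∧ (F ⟨a, g₁⟩).isLeft ∧ (F ⟨a, g₂⟩).isLeft := by
  have hmem : ∀ {g}, g ∈ E a → (⟨a, g⟩ : Σ _ : α, ι) ∈ A.sigma E := fun hg => mem_sigma.2 ⟨ha, hg⟩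
  have hR : #((E a).filter fun g => ¬(F ⟨a, g⟩).isLeft) ≤ #(E a) - 2 := by
    calc _ ≤ #((∅ : Finset β).disjSum
            ((range (#(E a) - 2)).map (Function.Embedding.sigmaMk (β := fun _ => ℕ) a))) := by
          refine card_le_card_of_injOn (fun g => F ⟨a, g⟩) (fun g hg => ?_)
            fun g hg g' hg' h => ?_
          · obtain ⟨hg, hnl⟩ := mem_filter.1 hg
            have := hF ⟨a, g⟩ (hmem hg)
            rcases h : F ⟨a, g⟩ with b | x <;> simp_all [twoDemandNbhd]
          · simpa using hFinj (hmem (mem_filter.1 hg).1) (hmem (mem_filter.1 hg').1) h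
      _ = #(E a) - 2 := by simp
  have hL : 1 < #((E a).filter fun g => (F ⟨a, g⟩).isLeft) := by
    have := card_filter_add_card_filter_not (s := E a) (fun g => (F ⟨a, g⟩).isLeft)
    omega
  obtain ⟨g₁, h₁, g₂, h₂, hne⟩ := one_lt_card.1 hL
  exact ⟨g₁, (mem_filter.1 h₁).1, g₂, (mem_filter.1 h₂).1, hne, (mem_filter.1 h₁).2,
    (mem_filter.1 h₂).2⟩

theorem TwoHallCondition.exists_two_matching [DecidableEq β] [Nonempty ι] [Nonempty β]
    {A : Finset α} {E : α → Finset ι} {V : ι → Finset β} (h : TwoHallCondition A E V)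
    (hdisj : (A : Set α).PairwiseDisjoint E) :
    ∃ (e f : α → ι) (τ : ι → β),
      (∀ a ∈ A, e a ∈ E a ∧ f a ∈ E a ∧ e a ≠ f a ∧ τ (e a) ∈ V (e a) ∧ τ (f a) ∈ V (f a)) ∧
      Set.InjOn τ (e '' A ∪ f '' A) := by
  classical
  obtain ⟨F, hFinj, hF⟩ := h.exists_injOn_twoDemandNbhd
  -- `τ g` reads off the matching at the node above `g`, unique as the `E a` are disjoint.
  let τ : ι → β := fun g => if hg : ∃ a ∈ A, g ∈ E a then
    Sum.elim id (fun _ => Classical.arbitrary β) (F ⟨hg.choose, g⟩) else Classical.arbitrary β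
  have hτ : ∀ a ∈ A, ∀ g ∈ E a, (F ⟨a, g⟩).isLeft → F ⟨a, g⟩ = .inl (τ g) := by
    intro a ha g hg hl
    have hg' : ∃ a ∈ A, g ∈ E a := ⟨a, ha, hg⟩
    obtain rfl : hg'.choose = a := hdisj.elim_finset hg'.choose_spec.1 ha g hg'.choose_spec.2 hg
    obtain ⟨b, hb⟩ := Sum.isLeft_iff.1 hl
    simp [τ, dif_pos hg', hb]
  have hV : ∀ a ∈ A, ∀ g ∈ E a, (F ⟨a, g⟩).isLeft → τ g ∈ V g := by
    intro a ha g hg hl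
    simpa [twoDemandNbhd, hτ a ha g hg hl] using hF ⟨a, g⟩ (mem_sigma.2 ⟨ha, hg⟩)
  have hpair := fun a (ha : a ∈ A) =>
    exists_ne_isLeft_of_injOn_twoDemandNbhd hFinj hF ha (h.two_le_card ha)
  choose! e he f hf hef hle hlf using hpair
  refine ⟨e, f, τ, fun a ha => ⟨he a ha, hf a ha, hef a ha, hV a ha _ (he a ha) (hle a ha),
    hV a ha _ (hf a ha) (hlf a ha)⟩, ?_⟩
  have hchosen : ∀ g ∈ e '' A ∪ f '' A, ∃ a ∈ A, g ∈ E a ∧ F ⟨a, g⟩ = .inl (τ g) := by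
    rintro g (⟨a, ha, rfl⟩ | ⟨a, ha, rfl⟩)
    · exact ⟨a, ha, he a ha, hτ a ha _ (he a ha) (hle a ha)⟩
    · exact ⟨a, ha, hf a ha, hτ a ha _ (hf a ha) (hlf a ha)⟩
  intro g hg g' hg' hgg'
  obtain ⟨a, ha, hga, hFa⟩ := hchosen g hg
  obtain ⟨a', ha', hga', hFa'⟩ := hchosen g' hg'
  have := @hFinj ⟨a, g⟩ (mem_sigma.2 ⟨ha, hga⟩) ⟨a', g'⟩ (mem_sigma.2 ⟨ha', hga'⟩)
    (by rw [hFa, hFa', hgg'])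
  exact (Sigma.mk.inj_iff.1 this).2.eq

end TwoHall

variable {n r : ℕ}

theorem eBetween_mono_s19 {E : Finset (Finset (Fin n))} {W T X X' : Finset (Fin n)} (hWT : W ⊆ T)
    (hXX' : X ⊆ X') (hTX' : Disjoint T X') : eBetween n E W X ≤ eBetween n E T X' := by
  refine card_le_card fun s hs => ?_
  obtain ⟨hsE, hsW, hsX⟩ := mem_filter.1 hs
  have hsT : s ∩ T = s ∩ W := by
    refine subset_antisymm (fun x hx => ?_) (inter_subset_inter_left hWT)
    rw [mem_inter] at hx ⊢
    by_contra hxW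
    exact disjoint_left.1 hTX' hx.2 (hXX' (hsX (mem_sdiff.2 ⟨hx.1, fun h => hxW ⟨hx.1, h⟩⟩)))
  exact mem_filter.2 ⟨hsE, hsT ▸ hsW, (sdiff_subset_sdiff subset_rfl hWT).trans (hsX.trans hXX')⟩

namespace Pseudorandom

variable {ε p d : ℝ} {E : Finset (Finset (Fin n))} {A B W X : Finset (Fin n)}

theorem eBetween_lt_of_two_mul_card_le (hps : Pseudorandom r n ε p E) (hAB : Disjoint A B)
    (hp : 0 ≤ p) (hε : 0 ≤ ε)
    (hd : 2 * ((1 + ε) * p * (#A).choose (r - 1) + log n ^ ((1 : ℝ) + ε)) < d)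
    (hW : W ⊆ A) (hX : X ⊆ B) (hXW : #X < 2 * #W) (hWA : 2 * #W ≤ #A) :
    (eBetween n E W X : ℝ) < #W * d := by
  obtain ⟨T, hWT, hTA, hT⟩ := exists_subsuperset_card_eq hW (by omega) hWA
  have hw : (0 : ℝ) < #W := by exact_mod_cast (by omega : 0 < #W)
  have hC : ((#X).choose (r - 1) : ℝ) ≤ (#A).choose (r - 1) := by
    exact_mod_cast Nat.choose_le_choose _ (by omega)
  have hL : 0 ≤ log n ^ ((1 : ℝ) + ε) := rpow_nonneg (log_natCast_nonneg n) _
  calc (eBetween n E W X : ℝ) ≤ eBetween n E T X := by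
        exact_mod_cast eBetween_mono_s19 hWT subset_rfl (hAB.mono hTA hX)
    _ ≤ (1 + ε) * p * #T * (#X).choose (r - 1) + #T * log n ^ ((1 : ℝ) + ε) :=
        hps.1 T X (hAB.mono hTA hX) (by omega)
    _ ≤ #W * (2 * ((1 + ε) * p * (#A).choose (r - 1) + log n ^ ((1 : ℝ) + ε))) := by
        rw [hT]; push_cast
        have : 0 ≤ (1 + ε) * p := by positivity
        nlinarith [mul_le_mul_of_nonneg_left hC this]
    _ < #W * d := mul_lt_mul_of_pos_left hd hw

theorem eBetween_lt_of_card_lt_two_mul (hps : Pseudorandom r n ε p E) (hAB : Disjoint A B)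
    (hp : 0 ≤ p) (hε₀ : 0 ≤ ε) (hε : ε ≤ 1 / 2) (hB : 2 * #A ≤ #B) (hn : 4 * #A ≤ n)
    (hA : (13 * (Nat.factorial (r - 1)) * log n / (ε ^ 3 * p)) ^ ((1 : ℝ) / (r - 1)) ≤ #A)
    (hd : (1 + ε) * p * (2 * #A).choose (r - 1) < d)
    (hW : W ⊆ A) (hX : X ⊆ B) (hXW : #X < 2 * #W) (hAW : #A < 2 * #W) :
    (eBetween n E W X : ℝ) < #W * d := by
  have hWA := card_le_card hW
  obtain ⟨X', hXX', hX'B, hX'⟩ :=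
    exists_subsuperset_card_eq hX (by omega : #X ≤ 2 * #W - 1) (by omega)
  have hw : (0 : ℝ) < #W := by exact_mod_cast (by omega : 0 < #W)
  have hX'R : (#X' : ℝ) = 2 * #W - 1 := by
    rw [hX', Nat.cast_sub (by omega : 1 ≤ 2 * #W)]; push_cast; ring
  have hC : ((#X').choose (r - 1) : ℝ) ≤ (2 * #A).choose (r - 1) := by
    exact_mod_cast Nat.choose_le_choose _ (by omega)
  calc (eBetween n E W X : ℝ) ≤ eBetween n E W X' := by
        exact_mod_cast eBetween_mono_s19 subset_rfl hXX' (hAB.mono hW hX'B)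
    _ ≤ (1 + ε) * p * #W * (#X').choose (r - 1) := by
        refine hps.2 W X' (hAB.mono hW hX'B) ?_ (by omega) ?_ (hA.trans ?_)
        · rw [hX'R]; nlinarith
        · have : (4 * #A : ℝ) ≤ n := by exact_mod_cast hn
          have : (#W : ℝ) ≤ #A := by exact_mod_cast hWA
          rw [hX'R, le_div_iff₀ two_pos]
          linarith
        · exact_mod_cast (by omega : #A ≤ #X')
    _ ≤ #W * ((1 + ε) * p * (2 * #A).choose (r - 1)) := by
        have : 0 ≤ (1 + ε) * p * #W := by positivity
        nlinarith [mul_le_mul_of_nonneg_left hC this]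
    _ < #W * d := mul_lt_mul_of_pos_left hd hw

theorem eBetween_lt_of_card_lt (hps : Pseudorandom r n ε p E) (hAB : Disjoint A B)
    (hp : 0 ≤ p) (hε₀ : 0 ≤ ε) (hε : ε ≤ 1 / 2) (hB : 2 * #A ≤ #B) (hn : 4 * #A ≤ n)
    (hA : (13 * (Nat.factorial (r - 1)) * log n / (ε ^ 3 * p)) ^ ((1 : ℝ) / (r - 1)) ≤ #A)
    (hd₁ : 2 * ((1 + ε) * p * (#A).choose (r - 1) + log n ^ ((1 : ℝ) + ε)) < d)
    (hd₂ : (1 + ε) * p * (2 * #A).choose (r - 1) < d) :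
    ∀ W ⊆ A, ∀ X ⊆ B, #X < 2 * #W → (eBetween n E W X : ℝ) < #W * d := fun W hW _ hX hXW =>
  (le_or_gt (2 * #W) #A).elim (hps.eBetween_lt_of_two_mul_card_le hAB hp hε₀ hd₁ hW hX hXW)
    (hps.eBetween_lt_of_card_lt_two_mul hAB hp hε₀ hε hB hn hA hd₂ hW hX hXW)

end Pseudorandom

def edgesIn (n : ℕ) (E : Finset (Finset (Fin n))) (x : Fin n) (U : Finset (Fin n)) :
    Finset (Finset (Fin n)) :=
  E.filter fun s => x ∈ s ∧ s \ {x} ⊆ U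

section edgesIn

variable {E : Finset (Finset (Fin n))} {A U : Finset (Fin n)} {x : Fin n} {s : Finset (Fin n)}

theorem mem_edgesIn : s ∈ edgesIn n E x U ↔ s ∈ E ∧ x ∈ s ∧ s \ {x} ⊆ U := mem_filter

theorem card_edgesIn : #(edgesIn n E x U) = degIn n E x U := rfl

theorem inter_eq_singleton_of_mem_edgesIn (hAU : Disjoint A U) (hx : x ∈ A)
    (hs : s ∈ edgesIn n E x U) : s ∩ A = {x} := by
  obtain ⟨-, hxs, hsU⟩ := mem_edgesIn.1 hs
  refine subset_antisymm (fun y hy => ?_) (by simpa using ⟨hxs, hx⟩)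
  rw [mem_inter] at hy
  by_contra hyx
  exact disjoint_left.1 hAU hy.2 (hsU (mem_sdiff.2 ⟨hy.1, hyx⟩))

theorem inter_eq_erase_of_mem_edgesIn (hx : x ∉ U) (hs : s ∈ edgesIn n E x U) :
    s ∩ U = s.erase x := by
  obtain ⟨-, -, hsU⟩ := mem_edgesIn.1 hs
  ext y
  simp only [mem_inter, mem_erase]
  exact ⟨fun h => ⟨fun hyx => hx (hyx ▸ h.2), h.1⟩,
    fun h => ⟨h.2, hsU (mem_sdiff.2 ⟨h.2, by simpa using h.1⟩)⟩⟩

theorem pairwiseDisjoint_edgesIn (hAU : Disjoint A U) :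
    (A : Set (Fin n)).PairwiseDisjoint fun a => edgesIn n E a U := by
  intro a ha a' ha' hne
  refine disjoint_left.2 fun s hs hs' => hne (singleton_injective ?_)
  exact (inter_eq_singleton_of_mem_edgesIn hAU ha hs).symm.trans
    (inter_eq_singleton_of_mem_edgesIn hAU ha' hs')

theorem sum_card_le_eBetween {EH : Finset (Finset (Fin n))} (hE : E ⊆ EH) (hAU : Disjoint A U)
    {W : Finset (Fin n)} (hW : W ⊆ A) {T : Fin n → Finset (Finset (Fin n))}
    (hT : ∀ a ∈ W, T a ⊆ edgesIn n E a U) :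
    ∑ a ∈ W, #(T a) ≤ eBetween n EH W (W.biUnion fun a => (T a).biUnion (· ∩ U)) := by
  have hWU := hAU.mono_left hW
  rw [← card_biUnion fun a ha a' ha' hne =>
    ((pairwiseDisjoint_edgesIn hWU ha ha' hne).mono (hT a ha) (hT a' ha'))]
  refine card_le_card fun s hs => ?_
  obtain ⟨a, ha, hsa⟩ := mem_biUnion.1 hs
  have hsW := inter_eq_singleton_of_mem_edgesIn hWU ha (hT a ha hsa)
  obtain ⟨hsE, -, hsU⟩ := mem_edgesIn.1 (hT a ha hsa)
  refine mem_filter.2 ⟨hE hsE, by simp [hsW], fun y hy => ?_⟩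
  obtain ⟨hys, hyW⟩ := mem_sdiff.1 hy
  have hyU : y ∈ U := hsU (mem_sdiff.2 ⟨hys, fun h => hyW (mem_singleton.1 h ▸ ha)⟩)
  exact mem_biUnion.2 ⟨a, ha, mem_biUnion.2 ⟨s, hsa, mem_inter.2 ⟨hys, hyU⟩⟩⟩

end edgesIn

theorem twoHallCondition_edgesIn {d : ℝ} {EH Eh : Finset (Finset (Fin n))}
    {A B : Finset (Fin n)} (hEh : Eh ⊆ EH) (hAB : Disjoint A B)
    (hexp : ∀ W ⊆ A, ∀ X ⊆ B, #X < 2 * #W → (eBetween n EH W X : ℝ) < #W * d)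
    (hdeg : ∀ a ∈ A, d + 1 ≤ degIn n Eh a B) :
    TwoHallCondition A (fun a => edgesIn n Eh a B) (· ∩ B) := by
  intro W hW T hT
  by_contra! hlt
  have hXB : (W.biUnion fun a => (T a).biUnion (· ∩ B)) ⊆ B :=
    biUnion_subset.2 fun _ _ => biUnion_subset.2 fun _ _ => inter_subset_right
  have hcount : (#W : ℝ) * d ≤ ∑ a ∈ W, (#(T a) : ℝ) := by
    rw [← nsmul_eq_mul]
    refine card_nsmul_le_sum _ _ _ fun a ha => ?_
    have h₁ : d + 1 ≤ (#(edgesIn n Eh a B) : ℝ) := hdeg a (hW ha)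
    have h₂ : (#(edgesIn n Eh a B) : ℝ) ≤ #(T a) + 1 := by exact_mod_cast (hT a ha).2
    linarith
  have hsum : (∑ a ∈ W, #(T a) : ℝ) ≤
      eBetween n EH W (W.biUnion fun a => (T a).biUnion (· ∩ B)) := by
    exact_mod_cast sum_card_le_eBetween hEh hAB hW fun a ha => (hT a ha).1
  linarith [hexp W hW _ hXB hlt]

def HasTwoMatching (n r : ℕ) (Eh : Finset (Finset (Fin n))) (A B : Finset (Fin n)) : Prop :=
  ∃ (e f : Fin n → Finset (Fin n)) (τ : Finset (Fin n) → Fin n),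
    (∀ a ∈ A, e a ∈ Eh ∧ f a ∈ Eh ∧ a ∈ e a ∧ a ∈ f a ∧ e a ≠ f a ∧
      (e a ∩ A).card = 1 ∧ (e a ∩ B).card = r - 1 ∧
      (f a ∩ A).card = 1 ∧ (f a ∩ B).card = r - 1 ∧
      τ (e a) ∈ e a ∩ B ∧ τ (f a) ∈ f a ∩ B) ∧
    (∀ a ∈ A, ∀ b ∈ A, a ≠ b → e a ≠ e b ∧ e a ≠ f b ∧ f a ≠ f b) ∧
    (∀ a ∈ A, ∀ b ∈ A,
      ∀ g ∈ ({e a, f a} : Finset (Finset (Fin n))),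
      ∀ g' ∈ ({e b, f b} : Finset (Finset (Fin n))),
        g ≠ g' → τ g ≠ τ g')

theorem hasTwoMatching_of_twoHallCondition {EH Eh : Finset (Finset (Fin n))}
    {A B : Finset (Fin n)} (hn : 0 < n) (hunif : ∀ s ∈ EH, #s = r) (hEh : Eh ⊆ EH)
    (hAB : Disjoint A B) (h : TwoHallCondition A (fun a => edgesIn n Eh a B) (· ∩ B)) :
    HasTwoMatching n r Eh A B := by
  have : Nonempty (Fin n) := ⟨⟨0, hn⟩⟩
  have hdisj := pairwiseDisjoint_edgesIn (E := Eh) hAB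
  obtain ⟨e, f, τ, hef, hτ⟩ := h.exists_two_matching hdisj
  have hedge : ∀ a ∈ A, ∀ s ∈ edgesIn n Eh a B,
      s ∈ Eh ∧ a ∈ s ∧ #(s ∩ A) = 1 ∧ #(s ∩ B) = r - 1 := fun a ha s hs => by
    obtain ⟨hsE, has, -⟩ := mem_edgesIn.1 hs
    refine ⟨hsE, has, by simp [inter_eq_singleton_of_mem_edgesIn hAB ha hs], ?_⟩
    rw [inter_eq_erase_of_mem_edgesIn (disjoint_left.1 hAB ha) hs, card_erase_of_mem has,
      hunif s (hEh hsE)]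
  have hmem : ∀ a ∈ A, ∀ g ∈ ({e a, f a} : Finset (Finset (Fin n))), g ∈ e '' A ∪ f '' A := by
    intro a ha g hg
    rcases mem_insert.1 hg with rfl | hg
    · exact Or.inl ⟨a, ha, rfl⟩
    · exact Or.inr ⟨a, ha, (mem_singleton.1 hg).symm⟩
  refine ⟨e, f, τ, fun a ha => ?_, fun a ha b hb hab => ?_,
    fun a ha b hb g hg g' hg' hne h => hne (hτ (hmem a ha g hg) (hmem b hb g' hg') h)⟩
  · obtain ⟨hea, hfa, hne, hτe, hτf⟩ := hef a ha
    obtain ⟨heE, hae, heA, heB⟩ := hedge a ha _ hea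
    obtain ⟨hfE, haf, hfA, hfB⟩ := hedge a ha _ hfa
    exact ⟨heE, hfE, hae, haf, hne, heA, heB, hfA, hfB, hτe, hτf⟩
  · have hne : ∀ {g g'}, g ∈ edgesIn n Eh a B → g' ∈ edgesIn n Eh b B → g ≠ g' :=
      fun hg hg' h => disjoint_left.1 (hdisj ha hb hab) hg (h ▸ hg')
    exact ⟨hne (hef a ha).1 (hef b hb).1, hne (hef a ha).1 (hef b hb).2.1,
      hne (hef a ha).2.1 (hef b hb).2.1⟩

theorem three_pow_div_factorial_mul_le {m b : ℕ} {N X p : ℝ} (hr : 1 ≤ r) (hX : 0 < X)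
    (hrN : r * X ≤ N) (hp : X ^ r / N ^ (r - 1) ≤ p) (hm : N / X ≤ m) (hb : 4 * m ≤ b) :
    3 ^ (r - 1) / (r - 1)! * X ≤ p * b.choose (r - 1) := by
  have hN : 0 < N := lt_of_lt_of_le (by positivity) hrN
  have hrm : r ≤ m := by exact_mod_cast ((le_div_iff₀ hX).2 hrN).trans hm
  obtain ⟨k, rfl⟩ := Nat.exists_eq_add_of_le' hr
  simp only [Nat.add_sub_cancel] at hp ⊢
  have hchoose : (3 * m : ℝ) ^ k / k ! ≤ b.choose k := by
    refine le_trans ?_ (Nat.pow_le_choose k b)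
    gcongr
    exact_mod_cast (by omega : 3 * m ≤ b + 1 - k)
  have hp0 : 0 ≤ p := le_trans (by positivity) hp
  calc 3 ^ k / k ! * X = X ^ (k + 1) / N ^ k * (3 * (N / X)) ^ k / k ! := by
        rw [mul_pow, div_pow, pow_succ]; field_simp
    _ ≤ p * (3 * m) ^ k / k ! := by gcongr
    _ ≤ p * b.choose k := by rw [mul_div_assoc]; gcongr

section DegreeMargin

variable {k m b : ℕ} {p γ ε : ℝ}

theorem four_le_two_pow (hk : 2 ≤ k) : (4 : ℝ) ≤ 2 ^ k :=
  calc (4 : ℝ) = 2 ^ 2 := by norm_num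
    _ ≤ 2 ^ k := pow_le_pow_right₀ (by norm_num) hk

theorem lt_degree_sub_one_of_two_mul (hk : 2 ≤ k) (hp : 0 ≤ p) (hεγ : ε ≤ γ)
    (hb : 2 * (2 * m) ≤ b) (hS : 1 < γ * (p * b.choose k)) :
    (1 + ε) * p * (2 * m).choose k < (1 / 2 ^ k + 2.5 * γ) * p * b.choose k - 1 := by
  have hC : (2 ^ k : ℝ) * (2 * m).choose k ≤ b.choose k := by
    exact_mod_cast (Nat.pow_mul_choose_le 2 (2 * m) k).trans (Nat.choose_le_choose k hb)
  set S := p * b.choose k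
  have hγS : 0 ≤ γ * S := by linarith
  have hγ : 0 ≤ γ := by
    by_contra! h
    nlinarith [mul_nonpos_of_nonpos_of_nonneg h.le (by positivity : 0 ≤ S)]
  have hx : p * (2 * m).choose k ≤ S / 2 ^ k := by
    rw [le_div_iff₀ (by positivity)]
    nlinarith [mul_le_mul_of_nonneg_left hC hp]
  have hγ4 : γ * S / 2 ^ k ≤ γ * S / 4 :=
    div_le_div_of_nonneg_left hγS (by norm_num) (four_le_two_pow hk)
  calc (1 + ε) * p * (2 * m).choose k ≤ (1 + γ) * (S / 2 ^ k) := by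
        rw [mul_assoc]; gcongr
    _ < (1 / 2 ^ k + 2.5 * γ) * p * b.choose k - 1 := by
        have : (1 / 2 ^ k + 2.5 * γ) * p * b.choose k = S / 2 ^ k + 2.5 * (γ * S) := by
          simp only [S]; ring
        rw [this]
        have : (1 + γ) * (S / 2 ^ k) = S / 2 ^ k + γ * S / 2 ^ k := by ring
        linarith

theorem lt_degree_sub_one_of_four_mul {L : ℝ} (hk : 2 ≤ k) (hp : 0 ≤ p) (hε : ε ≤ 1 / 4)
    (hb : 4 * m ≤ b) (hS : 1 < γ * (p * b.choose k)) (hL : 4 / 3 * 4 ^ k * L ≤ p * b.choose k) :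
    2 * ((1 + ε) * p * m.choose k + L) < (1 / 2 ^ k + 2.5 * γ) * p * b.choose k - 1 := by
  have hC : (4 ^ k : ℝ) * m.choose k ≤ b.choose k := by
    exact_mod_cast (Nat.pow_mul_choose_le 4 m k).trans (Nat.choose_le_choose k hb)
  set S := p * b.choose k
  have hx : p * m.choose k ≤ S / 4 ^ k := by
    rw [le_div_iff₀ (by positivity)]
    nlinarith [mul_le_mul_of_nonneg_left hC hp]
  have hL' : L ≤ 3 / 4 * (S / 4 ^ k) := by
    rw [mul_div_assoc', le_div_iff₀ (by positivity)]; linarith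
  have h2 : 4 * (S / 4 ^ k) ≤ S / 2 ^ k := by
    have : S / 2 ^ k = 2 ^ k * (S / 4 ^ k) := by
      rw [show (4 : ℝ) ^ k = 2 ^ k * 2 ^ k by rw [← mul_pow]; norm_num]; field_simp
    rw [this]
    exact mul_le_mul_of_nonneg_right (four_le_two_pow hk) (by positivity)
  have hsplit : (1 / 2 ^ k + 2.5 * γ) * p * b.choose k = S / 2 ^ k + 2.5 * (γ * S) := by
    simp only [S]; ring
  have hx0 : 0 ≤ p * m.choose k := by positivity
  rw [hsplit]
  nlinarith

end DegreeMargin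

theorem rpow_one_div_sub_one_le {m : ℕ} {N X p K : ℝ} (hr : 2 ≤ r) (hN : 0 < N) (hX : 0 < X)
    (hK : 0 ≤ K) (hKX : K ≤ X) (hp : X ^ r / N ^ (r - 1) ≤ p) (hm : N / X ≤ m) :
    (K / p) ^ ((1 : ℝ) / (r - 1)) ≤ m := by
  obtain ⟨k, rfl⟩ := Nat.exists_eq_add_of_le' (by omega : 1 ≤ r)
  simp only [Nat.add_sub_cancel] at hp
  have hp0 : 0 < p := lt_of_lt_of_le (by positivity) hp
  have hKm : K / p ≤ (m : ℝ) ^ k :=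
    calc K / p ≤ X / (X ^ (k + 1) / N ^ k) := div_le_div₀ hX.le hKX (by positivity) hp
      _ = (N / X) ^ k := by rw [div_pow, pow_succ]; field_simp
      _ ≤ (m : ℝ) ^ k := by gcongr
  have hk : ((k + 1 : ℕ) : ℝ) - 1 = (k : ℝ) := by push_cast; ring
  rw [hk, one_div, Real.rpow_inv_le_iff_of_pos (by positivity) (by positivity)
    (by exact_mod_cast (by omega : 0 < k)), Real.rpow_natCast]
  exact hKm

theorem Pseudorandom.hasTwoMatching {γ ε p : ℝ} {EH Eh : Finset (Finset (Fin n))}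
    {A B : Finset (Fin n)} (hps : Pseudorandom r n ε p EH) (hunif : ∀ s ∈ EH, #s = r)
    (hEh : Eh ⊆ EH) (hAB : Disjoint A B) (hr : 3 ≤ r) (hn : 0 < n) (hB : 4 * #A ≤ #B)
    (hε₀ : 0 ≤ ε) (hε : ε ≤ 1 / 4) (hεγ : ε ≤ γ) (hp : 0 ≤ p)
    (hS : 1 < γ * (p * (#B).choose (r - 1)))
    (hL : 4 / 3 * 4 ^ (r - 1) * log n ^ ((1 : ℝ) + ε) ≤ p * (#B).choose (r - 1))
    (hA : (13 * (Nat.factorial (r - 1)) * log n / (ε ^ 3 * p)) ^ ((1 : ℝ) / (r - 1)) ≤ #A)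
    (hdeg : ∀ a ∈ A,
      (1 / 2 ^ (r - 1) + 2.5 * γ) * p * (#B).choose (r - 1) ≤ (degIn n Eh a B : ℝ)) :
    HasTwoMatching n r Eh A B := by
  have hn : 4 * #A ≤ n := by
    have := card_le_univ (A ∪ B)
    rw [card_union_of_disjoint hAB, Fintype.card_fin] at this
    omega
  refine hasTwoMatching_of_twoHallCondition (by omega) hunif hEh hAB <|
    twoHallCondition_edgesIn hEh hAB (hps.eBetween_lt_of_card_lt hAB hp hε₀ (by linarith)
      (by omega) hn hA (lt_degree_sub_one_of_four_mul (by omega) hp hε hB hS hL)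
      (lt_degree_sub_one_of_two_mul (by omega) hp hεγ (by omega) hS))
    fun a ha => by linarith [hdeg a ha]

open Filter

theorem tendsto_log_natCast_atTop : Tendsto (fun n : ℕ => log n) atTop atTop :=
  tendsto_log_atTop.comp tendsto_natCast_atTop_atTop

theorem eventually_mul_log_rpow_le_log_rpow (C : ℝ) {a b : ℝ} (hab : a < b) :
    ∀ᶠ n : ℕ in atTop, C * log n ^ a ≤ log n ^ b := by
  filter_upwards [tendsto_log_natCast_atTop.eventually_gt_atTop 0,
    ((tendsto_rpow_atTop (sub_pos.2 hab)).comp tendsto_log_natCast_atTop).eventually_ge_atTop C]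
    with n hL hC
  calc C * log n ^ a ≤ log n ^ (b - a) * log n ^ a := by gcongr; exact hC
    _ = log n ^ b := by rw [← rpow_add hL, sub_add_cancel]

theorem eventually_mul_log_rpow_le {C : ℝ} (hC : 0 < C) (s : ℝ) :
    ∀ᶠ n : ℕ in atTop, C * log n ^ s ≤ n := by
  filter_upwards [tendsto_natCast_atTop_atTop.eventually
    ((isLittleO_log_rpow_rpow_atTop s one_pos).bound (inv_pos.2 hC)),
    tendsto_log_natCast_atTop.eventually_ge_atTop 0] with n hn hL
  rw [norm_of_nonneg (rpow_nonneg hL s), rpow_one, norm_natCast] at hn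
  rwa [← le_div_iff₀' hC, div_eq_inv_mul]

theorem eventually_log_bounds {γ ε c : ℝ} (hr : 0 < r) (hγ : 0 < γ) (hε : 0 < ε)
    (hc : 1 + ε < c) :
    ∀ᶠ n : ℕ in atTop, 0 < log n ∧ r * log n ^ c ≤ n ∧
      1 < γ * (3 ^ (r - 1) / (r - 1)! * log n ^ c) ∧
      4 / 3 * 4 ^ (r - 1) * log n ^ (1 + ε) ≤ 3 ^ (r - 1) / (r - 1)! * log n ^ c ∧
      13 * (r - 1)! * log n / ε ^ 3 ≤ log n ^ c := by
  set κ : ℝ := 3 ^ (r - 1) / (r - 1)!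
  have hκ : 0 < κ := by positivity
  filter_upwards [tendsto_log_natCast_atTop.eventually_gt_atTop 0,
    eventually_mul_log_rpow_le (by exact_mod_cast hr : (0 : ℝ) < r) c,
    eventually_mul_log_rpow_le_log_rpow (2 / (γ * κ)) (by linarith : (0 : ℝ) < c),
    eventually_mul_log_rpow_le_log_rpow (4 / 3 * 4 ^ (r - 1) / κ) hc,
    eventually_mul_log_rpow_le_log_rpow (13 * (r - 1)! / ε ^ 3) (by linarith : (1 : ℝ) < c)]
    with n hL hn h₁ h₂ h₃
  refine ⟨hL, hn, ?_, ?_, ?_⟩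
  · rw [rpow_zero, mul_one, div_le_iff₀ (by positivity)] at h₁
    linarith
  · rwa [div_mul_eq_mul_div, div_le_iff₀ hκ, mul_comm _ κ] at h₂
  · rwa [rpow_one, div_mul_eq_mul_div] at h₃

theorem stmt19_general (r : ℕ) (γ c : ℝ) (hr : 3 ≤ r) (hγ0 : 0 < γ) (hc : 2 < c) :
    ∃ ε > (0 : ℝ), ∃ n₀ : ℕ, ∀ n ≥ n₀, ∀ (p : ℝ)
      (EH Eh : Finset (Finset (Fin n))) (A B : Finset (Fin n)) (m : ℕ),
      (∀ s ∈ EH, s.card = r) → Pseudorandom r n ε p EH →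
      (∀ x y : Fin n, x ≠ y →
        ((EH.filter (fun s => x ∈ s ∧ y ∈ s)).card : ℝ) ≤ 2 * Real.log n) →
      Eh ⊆ EH →
      Disjoint A B → A.card = m → (n : ℝ) / (Real.log n) ^ c ≤ (m : ℝ) →
      4 * m ≤ B.card →
      (Real.log n) ^ (c * r) / (n : ℝ) ^ (r - 1) ≤ p →
      (∀ a ∈ A, (1 / 2 ^ (r - 1) + 2.5 * γ) * p * (B.card.choose (r - 1)) ≤
        (degIn n Eh a B : ℝ)) →
      ∃ (e f : Fin n → Finset (Fin n)) (τ : Finset (Fin n) → Fin n),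
        (∀ a ∈ A, e a ∈ Eh ∧ f a ∈ Eh ∧ a ∈ e a ∧ a ∈ f a ∧ e a ≠ f a ∧
          (e a ∩ A).card = 1 ∧ (e a ∩ B).card = r - 1 ∧
          (f a ∩ A).card = 1 ∧ (f a ∩ B).card = r - 1 ∧
          τ (e a) ∈ e a ∩ B ∧ τ (f a) ∈ f a ∩ B) ∧
        (∀ a ∈ A, ∀ b ∈ A, a ≠ b → e a ≠ e b ∧ e a ≠ f b ∧ f a ≠ f b) ∧
        (∀ a ∈ A, ∀ b ∈ A,
          ∀ g ∈ ({e a, f a} : Finset (Finset (Fin n))),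
          ∀ g' ∈ ({e b, f b} : Finset (Finset (Fin n))),
            g ≠ g' → τ g ≠ τ g') := by
  set ε := min γ (1 / 4)
  have hε0 : 0 < ε := lt_min hγ0 (by norm_num)
  obtain ⟨n₀, hn₀⟩ := (eventually_log_bounds (c := c) (by omega : 0 < r) hγ0 hε0
    (by linarith [min_le_right γ (1 / 4)])).exists_forall_of_atTop
  refine ⟨ε, hε0, n₀, fun n hn p EH Eh A B m hunif hps _ hEh hAB hAm hm hB hp hdeg => ?_⟩
  subst hAm
  obtain ⟨hL, hrn, h₁, h₂, h₃⟩ := hn₀ n hn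
  have hX : 0 < log n ^ c := rpow_pos_of_pos hL c
  have hn0 : (0 : ℝ) < n := lt_of_lt_of_le (by positivity) hrn
  have hp' : (log n ^ c) ^ r / (n : ℝ) ^ (r - 1) ≤ p := by
    rwa [← rpow_natCast, ← rpow_mul hL.le]
  have hS := three_pow_div_factorial_mul_le (by omega) hX hrn hp' hm hB
  refine hps.hasTwoMatching hunif hEh hAB hr (by exact_mod_cast hn0) hB hε0.le
    (min_le_right _ _) (min_le_left _ _) (le_trans (by positivity) hp')
    (h₁.trans_le (mul_le_mul_of_nonneg_left hS hγ0.le)) (h₂.trans hS) ?_ hdeg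
  rw [← div_div]
  exact rpow_one_div_sub_one_le (by omega) hn0 hX (by positivity) h₃ hp' hm

/-- The 2-matching lemma: in a subgraph `H` of an `(ε,p)`-pseudorandom
`r`-uniform hypergraph with codegrees at most `2 ln n`, disjoint sets `A, B`
with `|A| = m ≥ n / ln^c n`, `|B| ≥ 4m` and every `a ∈ A` of degree at least
`(2^(1-r) + 2.5γ) p C(|B|, r-1)` into `B` admit a 2-matching for `(A, B)`:
pairs of distinct edges `(e a, f a)` through each `a ∈ A`, all `(1,r-1)`-edges
for `(A,B)`, together with an injection `τ` from these edges into `B` with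
`τ g ∈ g`. -/
theorem stmt19 (r : ℕ) (γ c : ℝ) (hr : 3 ≤ r) (hγ0 : 0 < γ)
    (hγ1 : γ < 1 / 2 ^ (r - 1)) (hc : 2 < c) :
    ∃ ε > (0 : ℝ), ∃ n₀ : ℕ, ∀ n ≥ n₀, ∀ (p : ℝ)
      (EH Eh : Finset (Finset (Fin n))) (A B : Finset (Fin n)) (m : ℕ),
      (∀ s ∈ EH, s.card = r) → Pseudorandom r n ε p EH →
      (∀ x y : Fin n, x ≠ y →
        ((EH.filter (fun s => x ∈ s ∧ y ∈ s)).card : ℝ) ≤ 2 * Real.log n) →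
      Eh ⊆ EH →
      Disjoint A B → A.card = m → (n : ℝ) / (Real.log n) ^ c ≤ (m : ℝ) →
      4 * m ≤ B.card →
      (Real.log n) ^ (c * r) / (n : ℝ) ^ (r - 1) ≤ p →
      (∀ a ∈ A, (1 / 2 ^ (r - 1) + 2.5 * γ) * p * (B.card.choose (r - 1)) ≤
        (degIn n Eh a B : ℝ)) →
      ∃ (e f : Fin n → Finset (Fin n)) (τ : Finset (Fin n) → Fin n),
        (∀ a ∈ A, e a ∈ Eh ∧ f a ∈ Eh ∧ a ∈ e a ∧ a ∈ f a ∧ e a ≠ f a ∧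
          (e a ∩ A).card = 1 ∧ (e a ∩ B).card = r - 1 ∧
          (f a ∩ A).card = 1 ∧ (f a ∩ B).card = r - 1 ∧
          τ (e a) ∈ e a ∩ B ∧ τ (f a) ∈ f a ∩ B) ∧
        (∀ a ∈ A, ∀ b ∈ A, a ≠ b → e a ≠ e b ∧ e a ≠ f b ∧ f a ≠ f b) ∧
        (∀ a ∈ A, ∀ b ∈ A,
          ∀ g ∈ ({e a, f a} : Finset (Finset (Fin n))),
          ∀ g' ∈ ({e b, f b} : Finset (Finset (Fin n))),
            g ≠ g' → τ g ≠ τ g') :=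
  stmt19_general r γ c hr hγ0 hc
end
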